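/- arXiv:math/0409257 — 5 statements merged into one kernel-verified Lean document; each statement's English description precedes it below -/
import Mathlib

section
/- Let f ∈ R₁ be an irreducible polynomial which is nonhyperbolic (f has a root of absolute value 1) and not cyclotomic (no root of f is a root of unity). Let α = α_{R₁/(f)} be the corresponding automorphism of the compact connected abelian group X = X_{R₁/(f)}. Then the homoclinic group of α is trivial: if x ∈ X satisfies α^n x → 0 in X as |n| → ∞, then x = 0. -/
/-!
Lift `x` to a real sequence `w` tending to `0`. Then `f(τ) w` is integer valued and tends to `0`,
so it is a finitely supported integer sequence `g`. Twisting by a root `ζ` of `f` on the unit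
circle and telescoping over growing windows gives `∑ g j ζ⁻ʲ = 0`; since `f` is irreducible,
Gauss's lemma makes `f` divide the polynomial `Xᴬ ∑ g j X⁻ʲ`, i.e. `g = f(τ) h` for a finitely
supported integer sequence `h`. Now `w - h` is a null solution of `f(τ) z = 0`; splitting `f` into
linear factors over `ℂ`, every such solution vanishes, because a geometric sequence tending to `0`
in both directions is zero. Hence `w = h` is integral and `x = 0`.
-/

open Filter Topology Polynomial Finset

lemma tendsto_add_natCast_of_tendsto_cofinite {α : Type*} {l : Filter α} {φ : ℤ → α}
    (hφ : Tendsto φ cofinite l) (t : ℤ) : Tendsto (fun N : ℕ => φ (t + N)) atTop l :=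
  Nat.cofinite_eq_atTop ▸
    hφ.comp (Function.Injective.tendsto_cofinite fun a b h => by simpa using h)

lemma tendsto_sub_natCast_of_tendsto_cofinite {α : Type*} {l : Filter α} {φ : ℤ → α}
    (hφ : Tendsto φ cofinite l) (t : ℤ) : Tendsto (fun N : ℕ => φ (t - N)) atTop l :=
  Nat.cofinite_eq_atTop ▸
    hφ.comp (Function.Injective.tendsto_cofinite fun a b h => by simpa using h)

section SeqShift

variable (R M : Type*) [CommRing R] [AddCommGroup M] [Module R M]

-- The shift `τ`; the operator `f(τ)` of the statement is `aeval (seqShift R M) f`.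
def seqShift : Module.End R (ℤ → M) := LinearMap.funLeft R M (· + 1)

variable {R M}

lemma seqShift_apply (v : ℤ → M) (n : ℤ) : seqShift R M v n = v (n + 1) := rfl

lemma seqShift_pow_apply (k : ℕ) (v : ℤ → M) (n : ℤ) : (seqShift R M ^ k) v n = v (n + k) := by
  induction k generalizing n with
  | zero => simp
  | succ k ih =>
    rw [pow_succ', Module.End.mul_apply, seqShift_apply, ih]
    push_cast
    ring_nf

lemma seqShift_pow_single (A : ℤ) (k : ℕ) (a : M) :
    (seqShift R M ^ k) (Pi.single A a) = Pi.single (A - k) a := by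
  ext n
  simp only [seqShift_pow_apply, Pi.single_apply, eq_sub_iff_add_eq]

lemma aeval_seqShift_apply {p : R[X]} {d : ℕ} (hd : p.natDegree < d) (v : ℤ → M) (n : ℤ) :
    aeval (seqShift R M) p v n = ∑ k ∈ range d, p.coeff k • v (n + k) := by
  simp [aeval_eq_sum_range' hd, seqShift_pow_apply]

lemma map_aeval_seqShift {N : Type*} [AddCommGroup N] [Module R N] (φ : M →ₗ[R] N) (p : R[X])
    (v : ℤ → M) : φ ∘ aeval (seqShift R M) p v = aeval (seqShift R N) p (φ ∘ v) := by
  ext n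
  simp [aeval_seqShift_apply p.natDegree.lt_succ_self]

lemma aeval_map_seqShift {A : Type*} [CommRing A] [Algebra R A] (p : R[X]) (v : ℤ → A) :
    aeval (seqShift A A) (p.map (algebraMap R A)) v = aeval (seqShift R A) p v := by
  ext n
  have hd := p.natDegree.lt_succ_self
  rw [aeval_seqShift_apply hd, aeval_seqShift_apply (natDegree_map_le.trans_lt hd)]
  simp [Algebra.smul_def]

lemma tendsto_aeval_seqShift [TopologicalSpace M] [ContinuousAdd M] [ContinuousConstSMul R M]
    (p : R[X]) {v : ℤ → M} (hv : Tendsto v cofinite (𝓝 0)) :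
    Tendsto (aeval (seqShift R M) p v) cofinite (𝓝 0) := by
  have hshift (k : ℕ) : Tendsto (fun n : ℤ => v (n + k)) cofinite (𝓝 0) :=
    hv.comp (add_left_injective _).tendsto_cofinite
  simpa [funext (aeval_seqShift_apply p.natDegree.lt_succ_self v)] using
    tendsto_finsetSum _ fun k _ => (hshift k).const_smul (p.coeff k)

end SeqShift

lemma eq_zero_of_tendsto_of_succ_eq_mul {K : Type*} [CommMonoidWithZero K] [NoZeroDivisors K]
    [TopologicalSpace K] [ContinuousMul K] [T2Space K] {a : K} {v : ℤ → K}
    (hv : Tendsto v cofinite (𝓝 0)) (hrec : ∀ n, v (n + 1) = a * v n) : v = 0 := by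
  funext n
  -- `v (n + k) * v (n - k)` does not depend on `k`, but tends to `0`.
  have hconst (k : ℕ) : v (n + k) * v (n - k) = v n ^ 2 := by
    induction k with
    | zero => simp [sq]
    | succ k ih =>
      have h := hrec (n - (k + 1))
      rw [show n - (k + 1) + 1 = n - k by ring] at h
      push_cast
      rw [← add_assoc, hrec, ← ih, h]
      ac_rfl
  have hsq : Tendsto (fun _ : ℕ => v n ^ 2) atTop (𝓝 0) := by
    simpa [hconst] using (tendsto_add_natCast_of_tendsto_cofinite hv n).mul
      (tendsto_sub_natCast_of_tendsto_cofinite hv n)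
  exact pow_eq_zero_iff two_ne_zero |>.mp (tendsto_nhds_unique tendsto_const_nhds hsq)

lemma eq_zero_of_tendsto_of_aeval_seqShift_eq_zero {K : Type*} [Field K] [IsAlgClosed K]
    [TopologicalSpace K] [IsTopologicalRing K] [T2Space K] {p : K[X]} (hp : p ≠ 0) {v : ℤ → K}
    (hv : Tendsto v cofinite (𝓝 0)) (hpv : aeval (seqShift K K) p v = 0) : v = 0 := by
  suffices ∀ s : Multiset K, ∀ v : ℤ → K, Tendsto v cofinite (𝓝 0) →
      aeval (seqShift K K) (s.map (X - C ·)).prod v = 0 → v = 0 by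
    rw [← C_leadingCoeff_mul_prod_multiset_X_sub_C (IsAlgClosed.card_roots_eq_natDegree (p := p)),
      aeval_mul, aeval_C, Module.End.mul_apply, Module.algebraMap_end_apply,
      smul_eq_zero] at hpv
    exact this _ v hv (hpv.resolve_left (leadingCoeff_ne_zero.mpr hp))
  intro s
  induction s using Multiset.induction_on with
  | empty => simp
  | cons a s ih =>
    intro v hv hsv
    rw [Multiset.map_cons, Multiset.prod_cons, aeval_mul, Module.End.mul_apply] at hsv
    refine ih v hv (eq_zero_of_tendsto_of_succ_eq_mul (a := a) (tendsto_aeval_seqShift _ hv)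
      fun n => ?_)
    simpa only [map_sub, aeval_X, aeval_C, LinearMap.sub_apply, Pi.sub_apply,
      Module.algebraMap_end_apply, seqShift_apply, Pi.smul_apply, smul_eq_mul, Pi.zero_apply,
      sub_eq_zero] using congrFun hsv n

lemma sum_Ico_add_sub_sum_Ico {E : Type*} [AddCommGroup E] (φ : ℤ → E) {a b : ℤ} {k : ℕ}
    (hab : a + k ≤ b) :
    ∑ j ∈ Ico a b, φ (j + k) - ∑ j ∈ Ico a b, φ j =
      ∑ j ∈ Ico b (b + k), φ j - ∑ j ∈ Ico a (a + k), φ j := by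
  have split {a b c : ℤ} (hab : a ≤ b) (hbc : b ≤ c) :
      ∑ j ∈ Ico a c, φ j = ∑ j ∈ Ico a b, φ j + ∑ j ∈ Ico b c, φ j := by
    rw [← Ico_union_Ico_eq_Ico hab hbc, sum_union (Ico_disjoint_Ico_consecutive a b c)]
  rw [sum_Ico_add', split hab (by omega), split (by omega : a ≤ a + k) hab]
  abel

lemma tendsto_sum_Ico_add_sub_sum_Ico {E : Type*} [AddCommGroup E] [TopologicalSpace E]
    [IsTopologicalAddGroup E] {φ : ℤ → E} (hφ : Tendsto φ cofinite (𝓝 0)) (k : ℕ) :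
    Tendsto (fun N : ℕ => ∑ j ∈ Ico (-N : ℤ) N, φ (j + k) - ∑ j ∈ Ico (-N : ℤ) N, φ j)
      atTop (𝓝 0) := by
  have hblock (b : ℤ) : ∑ j ∈ Ico b (b + k), φ j = ∑ t ∈ Ico (0 : ℤ) k, φ (t + b) := by
    rw [sum_Ico_add', zero_add, add_comm]
  have hlim : Tendsto (fun N : ℕ => ∑ t ∈ Ico (0 : ℤ) k, φ (t + N) - ∑ t ∈ Ico (0 : ℤ) k, φ (t - N))
      atTop (𝓝 0) := by
    simpa using (tendsto_finsetSum _ fun t _ => tendsto_add_natCast_of_tendsto_cofinite hφ t).sub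
      (tendsto_finsetSum _ fun t _ => tendsto_sub_natCast_of_tendsto_cofinite hφ t)
  refine hlim.congr' ?_
  filter_upwards [eventually_ge_atTop k] with N hN
  rw [sum_Ico_add_sub_sum_Ico φ (by omega), hblock, hblock]
  simp only [sub_eq_add_neg]

lemma sum_aeval_seqShift_mul_zpow_neg_eq_zero {K : Type*} [NormedField K] {p : K[X]} {ζ : K}
    (hζ : ‖ζ‖ = 1) (hpζ : p.eval ζ = 0) {w : ℤ → K} (hw : Tendsto w cofinite (𝓝 0))
    {S : Finset ℤ} (hS : ∀ j ∉ S, aeval (seqShift K K) p w j = 0) :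
    ∑ j ∈ S, aeval (seqShift K K) p w j * ζ ^ (-j) = 0 := by
  set g := aeval (seqShift K K) p w with hg
  have hζ0 : ζ ≠ 0 := norm_ne_zero_iff.mp (hζ ▸ one_ne_zero)
  set φ : ℤ → K := fun j => w j * ζ ^ (-j)
  have hφ : Tendsto φ cofinite (𝓝 0) := by
    rw [tendsto_zero_iff_norm_tendsto_zero] at hw ⊢
    simpa [φ, hζ] using hw
  set c : ℕ → K := fun k => p.coeff k * ζ ^ k
  have hc : ∑ k ∈ range (p.natDegree + 1), c k = 0 := by rw [← hpζ, eval_eq_sum_range]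
  -- Twisting by `ζ ^ (-j)` turns `g` into `∑ k, c k • φ (· + k)`, and `∑ k, c k = p.eval ζ = 0`.
  have hwindow (N : ℕ) : ∑ j ∈ Ico (-N : ℤ) N, g j * ζ ^ (-j) = ∑ k ∈ range (p.natDegree + 1),
      c k * (∑ j ∈ Ico (-N : ℤ) N, φ (j + k) - ∑ j ∈ Ico (-N : ℤ) N, φ j) := by
    calc ∑ j ∈ Ico (-N : ℤ) N, g j * ζ ^ (-j)
        = ∑ j ∈ Ico (-N : ℤ) N, ∑ k ∈ range (p.natDegree + 1), c k * φ (j + k) := by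
          refine sum_congr rfl fun j _ => ?_
          rw [hg, aeval_seqShift_apply p.natDegree.lt_succ_self, sum_mul]
          refine sum_congr rfl fun k _ => ?_
          simp only [c, φ, smul_eq_mul, zpow_neg, zpow_add₀ hζ0, zpow_natCast]
          field_simp
      _ = ∑ k ∈ range (p.natDegree + 1), c k * ∑ j ∈ Ico (-N : ℤ) N, φ (j + k) := by
          rw [sum_comm]
          simp only [mul_sum]
      _ = _ := by simp only [mul_sub, sum_sub_distrib, ← sum_mul, hc, zero_mul, sub_zero]
  have hlim : Tendsto (fun N : ℕ => ∑ j ∈ Ico (-N : ℤ) N, g j * ζ ^ (-j)) atTop (𝓝 0) := by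
    have := tendsto_finsetSum (range (p.natDegree + 1)) fun k _ =>
      (tendsto_sum_Ico_add_sub_sum_Ico hφ k).const_mul (c k)
    simp only [mul_zero, sum_const_zero] at this
    exact this.congr fun N => (hwindow N).symm
  have hS_sub : ∀ᶠ N : ℕ in atTop, S ⊆ Ico (-N : ℤ) N := by
    refine (eventually_all_finset S).2 fun j _ => ?_
    filter_upwards [eventually_gt_atTop j.natAbs] with N hN
    rw [mem_Ico]
    omega
  refine tendsto_nhds_unique (hlim.congr' ?_) tendsto_const_nhds |>.symm
  filter_upwards [hS_sub] with N hN
  exact (sum_subset hN fun j _ hj => by rw [hS j hj, zero_mul]).symm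

lemma Irreducible.int_dvd_of_aeval_eq_zero {K : Type*} [Field K] [CharZero K] {f q : ℤ[X]}
    (hf : Irreducible f) {ζ : K} (hfζ : aeval ζ f = 0) (hqζ : aeval ζ q = 0) : f ∣ q := by
  have hprim : f.IsPrimitive := hf.isPrimitive
    (natDegree_pos_of_aeval_root hf.ne_zero hfζ fun a ha => by simpa using ha).ne'
  have hmap (p : ℤ[X]) : aeval ζ (p.map (Int.castRingHom ℚ)) = aeval ζ p := by
    rw [← algebraMap_int_eq, aeval_map_algebraMap]
  rw [IsPrimitive.Int.dvd_iff_map_cast_dvd_map_cast _ _ hprim,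
    ← ((IsPrimitive.Int.irreducible_iff_irreducible_map_cast hprim).mp hf).dvd_iff_aeval_eq_zero
      ((hmap f).trans hfζ), hmap, hqζ]

lemma exists_aeval_seqShift_single_eq_and_aeval_eq_zero {R K : Type*} [CommRing R] [Field K]
    [Algebra R K] {g : ℤ → R} {S : Finset ℤ} (hS : ∀ j ∉ S, g j = 0) {A : ℤ}
    (hA : ∀ j ∈ S, j ≤ A) {ζ : K} (hζ : ζ ≠ 0)
    (hgζ : ∑ j ∈ S, algebraMap R K (g j) * ζ ^ (-j) = 0) :
    ∃ P : R[X], aeval (seqShift R R) P (Pi.single A 1) = g ∧ aeval ζ P = 0 := by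
  have hA' (j : ℤ) (hj : j ∈ S) : (((A - j).toNat : ℕ) : ℤ) = A - j :=
    Int.toNat_of_nonneg (sub_nonneg.mpr (hA j hj))
  refine ⟨∑ j ∈ S, monomial (A - j).toNat (g j), ?_, ?_⟩
  · ext n
    simp only [map_sum, aeval_monomial, LinearMap.sum_apply, Finset.sum_apply,
      Module.End.mul_apply, Module.algebraMap_end_apply, seqShift_pow_single, Pi.smul_apply]
    rw [sum_congr rfl fun j hj => by rw [hA' j hj, sub_sub_cancel]]
    simp only [Pi.single_apply, smul_eq_mul, mul_ite, mul_one, mul_zero, sum_ite_eq]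
    split_ifs with hn
    · rfl
    · exact (hS n hn).symm
  · rw [map_sum, ← mul_zero (ζ ^ A), ← hgζ, mul_sum]
    refine sum_congr rfl fun j hj => ?_
    rw [aeval_monomial, ← zpow_natCast, hA' j hj, zpow_sub₀ hζ, zpow_neg, div_eq_mul_inv]
    ring

lemma exists_eq_intCast_of_aeval_seqShift_eq_intCast {K : Type*} [NormedField K] [IsAlgClosed K]
    [CharZero K] {f : ℤ[X]} (hf : Irreducible f) {ζ : K} (hfζ : aeval ζ f = 0) (hζ : ‖ζ‖ = 1)
    {w : ℤ → K} (hw : Tendsto w cofinite (𝓝 0)) {g : ℤ → ℤ}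
    (hg : aeval (seqShift ℤ K) f w = (↑) ∘ g) (hgfin : ∀ᶠ j in cofinite, g j = 0) :
    ∃ h : ℤ → ℤ, w = (↑) ∘ h := by
  set S := (eventually_cofinite.mp hgfin).toFinset
  have hS (j : ℤ) (hj : j ∉ S) : g j = 0 := by simpa [S] using hj
  obtain ⟨A, hA⟩ := S.bddAbove
  have hζ0 : ζ ≠ 0 := norm_ne_zero_iff.mp (hζ ▸ one_ne_zero)
  have hgζ : ∑ j ∈ S, algebraMap ℤ K (g j) * ζ ^ (-j) = 0 := by
    have := sum_aeval_seqShift_mul_zpow_neg_eq_zero hζ (p := f.map (algebraMap ℤ K))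
      (by rwa [eval_map_algebraMap]) hw (S := S)
      (fun j hj => by rw [aeval_map_seqShift, hg, Function.comp_apply, hS j hj, Int.cast_zero])
    rw [aeval_map_seqShift, hg] at this
    simpa using this
  obtain ⟨P, hPg, hPζ⟩ := exists_aeval_seqShift_single_eq_and_aeval_eq_zero hS hA hζ0 hgζ
  obtain ⟨H, rfl⟩ := hf.int_dvd_of_aeval_eq_zero hfζ hPζ
  set cast := (Int.castAddHom K).toIntLinearMap
  set h := aeval (seqShift ℤ ℤ) H (Pi.single A 1)
  have hh : Tendsto (cast ∘ h) cofinite (𝓝 0) := by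
    rw [map_aeval_seqShift]
    refine tendsto_aeval_seqShift H (tendsto_const_nhds.congr' ?_)
    filter_upwards [eventually_cofinite_ne A] with n hn
    simp [hn]
  have hfh : aeval (seqShift ℤ K) f (cast ∘ h) = (↑) ∘ g := by
    rw [← map_aeval_seqShift, ← Module.End.mul_apply, ← aeval_mul, hPg]
    rfl
  have hz : w - cast ∘ h = 0 := eq_zero_of_tendsto_of_aeval_seqShift_eq_zero
    ((Polynomial.map_ne_zero_iff (algebraMap ℤ K).injective_int).mpr hf.ne_zero)
    (sub_zero (0 : K) ▸ hw.sub hh) (by rw [aeval_map_seqShift, map_sub, hg, hfh, sub_self])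
  exact ⟨h, sub_eq_zero.mp hz⟩

lemma AddCircle.exists_coe_eq_and_abs_eq_norm {p : ℝ} (y : AddCircle p) :
    ∃ r : ℝ, (r : AddCircle p) = y ∧ |r| = ‖y‖ := by
  obtain ⟨r, rfl⟩ := QuotientAddGroup.mk_surjective y
  refine ⟨r - round (p⁻¹ * r) * p, ?_, (norm_eq p).symm⟩
  rw [coe_sub, sub_eq_self, coe_eq_zero_iff]
  exact ⟨_, zsmul_eq_mul _ _⟩

lemma AddCircle.exists_lift_of_tendsto_zero {p : ℝ} {ι : Type*} {l : Filter ι}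
    {x : ι → AddCircle p} (hx : Tendsto x l (𝓝 0)) :
    ∃ w : ι → ℝ, (fun i => (w i : AddCircle p)) = x ∧ Tendsto w l (𝓝 0) := by
  choose w hwx hwn using fun i => exists_coe_eq_and_abs_eq_norm (x i)
  refine ⟨w, funext hwx, ?_⟩
  rw [tendsto_zero_iff_norm_tendsto_zero] at hx ⊢
  simpa [← hwn] using hx

lemma AddCircle.exists_intCast_of_coe_eq_zero_of_tendsto {ι : Type*} {l : Filter ι} {y : ι → ℝ}
    (hy : ∀ i, (y i : AddCircle (1 : ℝ)) = 0) (hy0 : Tendsto y l (𝓝 0)) :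
    ∃ g : ι → ℤ, y = (↑) ∘ g ∧ ∀ᶠ i in l, g i = 0 := by
  choose g hg using fun i => (coe_eq_zero_iff 1).mp (hy i)
  have hyg : y = (↑) ∘ g := funext fun i => by simp [← hg i]
  refine ⟨g, hyg, ?_⟩
  rw [hyg, ← Int.cast_zero, ← Int.isClosedEmbedding_coe_real.tendsto_nhds_iff, nhds_discrete,
    tendsto_pure] at hy0
  exact hy0

theorem homoclinic_group_trivial_general
    (f : Polynomial ℤ) (m : ℕ) (hdeg : f.natDegree = m)
    (hirr : Irreducible f)
    (hnonhyp : ∃ z : ℂ, Polynomial.aeval z f = 0 ∧ ‖z‖ = 1)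
    (x : ℤ → AddCircle (1 : ℝ))
    (hx : ∀ j : ℤ, ∑ k ∈ Finset.range (m + 1), f.coeff k • x (j + (k : ℤ)) = 0)
    (hhom : Tendsto (fun n : ℤ => (fun j : ℤ => x (j + n)))
      cofinite (𝓝 (0 : ℤ → AddCircle (1 : ℝ)))) :
    x = 0 := by
  obtain ⟨ζ, hfζ, hζ⟩ := hnonhyp
  have hx0 : Tendsto x cofinite (𝓝 0) := by
    simpa [Function.comp_def] using ((continuous_apply 0).tendsto 0).comp hhom
  obtain ⟨w, rfl, hw⟩ := AddCircle.exists_lift_of_tendsto_zero hx0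
  have hfw (j : ℤ) : (aeval (seqShift ℤ ℝ) f w j : AddCircle (1 : ℝ)) = 0 := by
    have := congrFun (map_aeval_seqShift
      (QuotientAddGroup.mk' (AddSubgroup.zmultiples (1 : ℝ))).toIntLinearMap f w) j
    simp only [Function.comp_apply, AddMonoidHom.coe_toIntLinearMap, QuotientAddGroup.mk'_apply]
      at this
    rw [this, aeval_seqShift_apply (d := m + 1) (by omega)]
    exact hx j
  obtain ⟨g, hg, hgfin⟩ :=
    AddCircle.exists_intCast_of_coe_eq_zero_of_tendsto hfw (tendsto_aeval_seqShift f hw)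
  obtain ⟨h, hwh⟩ := exists_eq_intCast_of_aeval_seqShift_eq_intCast hirr hfζ hζ
    (w := (↑) ∘ w) (Complex.continuous_ofReal.tendsto' 0 0 rfl |>.comp hw)
    (by rw [show Complex.ofReal ∘ w = Complex.ofRealHom.toAddMonoidHom.toIntLinearMap ∘ w from rfl,
      ← map_aeval_seqShift, hg]; rfl) hgfin
  funext n
  have hn : ((w n : ℝ) : ℂ) = ((h n : ℤ) : ℂ) := congrFun hwh n
  have : w n = h n := by exact_mod_cast hn
  simp [this]

/-- An irreducible, nonhyperbolic, noncyclotomic `f ∈ ℤ[u^{±1}]` (normalized as an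
integer polynomial with nonzero constant term) gives rise to the automorphism
`α = α_{R₁/(f)}` of `X = X_{R₁/(f)} = ker f(τ) ⊆ 𝕋^ℤ` (restriction of the shift `τ`).
Every `α`-homoclinic point of `X` is `0`. -/
theorem homoclinic_group_trivial
    (f : Polynomial ℤ) (m : ℕ) (hm : 0 < m) (hdeg : f.natDegree = m)
    (hlead : 0 < f.leadingCoeff) (hconst : f.coeff 0 ≠ 0) (hirr : Irreducible f)
    (hnonhyp : ∃ z : ℂ, Polynomial.aeval z f = 0 ∧ ‖z‖ = 1)
    (hnoncyc : ¬ ∃ z : ℂ, Polynomial.aeval z f = 0 ∧ ∃ n : ℕ, 0 < n ∧ z ^ n = 1)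
    (x : ℤ → AddCircle (1 : ℝ))
    (hx : ∀ j : ℤ, ∑ k ∈ Finset.range (m + 1), f.coeff k • x (j + (k : ℤ)) = 0)
    (hhom : Tendsto (fun n : ℤ => (fun j : ℤ => x (j + n)))
      cofinite (𝓝 (0 : ℤ → AddCircle (1 : ℝ)))) :
    x = 0 :=
  homoclinic_group_trivial_general f m hdeg hirr hnonhyp x hx hhom
end

section
/- Let f = f₀ + f₁u + ⋯ + f_m u^m ∈ R₁ be an irreducible polynomial with m > 0, f_m > 0, f₀ ≠ 0, which is not cyclotomic (no root of f is a root of unity). Then there exist unique elements w^{Δ+} and w^{Δ−} of ℓ^∞(ℤ,ℝ) such that f(σ̄)w^{Δ+} = δ₀ and w^{Δ+}_n → 0 as n → +∞, and f(σ̄)w^{Δ−} = δ₀ and w^{Δ−}_n → 0 as n → −∞. Moreover w^{Δ−} − w^{Δ+} ∈ ker f(σ̄), and the decay is exponential: there exist C > 0 and 0 < θ < 1 with |w^{Δ+}_n| ≤ Cθ^n and |w^{Δ−}_{−n}| ≤ Cθ^n for every n ≥ 1. -/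
open Filter Topology

/-- The action of `f(σ̄)` on two-sided real sequences, where `σ̄` is the shift
`(σ̄ w) n = w (n+1)`:  `(f(σ̄) w) n = ∑ₖ fₖ w (n+k)`. -/
noncomputable def fAct (f : Polynomial ℤ) (w : ℤ → ℝ) : ℤ → ℝ :=
  fun n => ∑ k ∈ Finset.range (f.natDegree + 1), (f.coeff k : ℝ) * w (n + (k : ℤ))

/-- The sequence `δ₀` with `0`-th coordinate `1` and all other coordinates `0`. -/
noncomputable def delta0 : ℤ → ℝ := fun n => if n = 0 then 1 else 0

/-!
Over `ℂ` the irreducible `f` is separable, `f = c ∏ λ (X - λ)` over its distinct roots, and the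
Lagrange identity `1 = ∑ λ aλ ∏ μ ≠ λ (X - μ)` reduces `f(σ̄) w = δ₀` to the first order
equations `(σ̄ - λ) e = δ₀`. Each of them has the solution `λⁿ⁻¹` supported on `n ≥ 1` and the
solution `-λⁿ⁻¹` supported on `n ≤ 0`. Taking for every root the one that stays bounded and decays
at `+∞` (resp. `-∞`) and recombining gives `w^{Δ+}` (resp. `w^{Δ−}`) as a real part, with
exponential decay. For uniqueness, the kernel of `σ̄ - λ` consists of the geometric sequences
`λⁿ c`, and such a sequence that is bounded and tends to `0` at one end vanishes; since `f(σ̄)` is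
a product of such factors, a bounded element of its kernel tending to `0` at one end vanishes too.
-/

open Polynomial Lagrange

section Algebra

variable {K M : Type*} [Field K] [AddCommGroup M] [Module K M] {T : Module.End K M}
  {S : Submodule K M}

theorem Module.End.aeval_apply_mem_of_mem_invtSubmodule (hS : S ∈ T.invtSubmodule) (p : K[X])
    {v : M} (hv : v ∈ S) : aeval T p v ∈ S := by
  induction p using Polynomial.induction_on with
  | C a => simpa [Module.algebraMap_end_apply] using S.smul_mem a hv
  | add p q hp hq => simpa using S.add_mem hp hq
  | monomial n a h =>
    rw [pow_succ, ← mul_assoc, mul_comm, map_mul, aeval_X, Module.End.mul_apply]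
    exact hS h

theorem Module.End.eq_zero_of_aeval_apply_eq_zero [IsAlgClosed K] (hS : S ∈ T.invtSubmodule)
    (hT : ∀ l : K, ∀ v ∈ S, aeval T (X - C l) v = 0 → v = 0) {p : K[X]} (hp : p ≠ 0) {v : M}
    (hv : v ∈ S) (h : aeval T p v = 0) : v = 0 := by
  have hprod (s : Multiset K) : ∀ v ∈ S, aeval T (s.map (X - C ·)).prod v = 0 → v = 0 := by
    induction s using Multiset.induction_on with
    | empty => simp
    | cons a s ih =>
      intro v hv h
      rw [Multiset.map_cons, Multiset.prod_cons, map_mul, Module.End.mul_apply] at h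
      exact ih v hv (hT a _ (aeval_apply_mem_of_mem_invtSubmodule hS _ hv) h)
  rw [← C_leadingCoeff_mul_prod_multiset_X_sub_C (IsAlgClosed.card_roots_eq_natDegree (p := p)), map_mul, Module.End.mul_apply, aeval_C, Module.algebraMap_end_apply,
    smul_eq_zero] at h
  exact hprod _ v hv (h.resolve_left (leadingCoeff_ne_zero.2 hp))

theorem Lagrange.aeval_nodal_sum_nodalWeight_smul [DecidableEq K] (T : Module.End K M)
    {s : Finset K} (hs : s.Nonempty) {x : M} {E : K → M}
    (hE : ∀ l ∈ s, aeval T (X - C l) (E l) = x) :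
    aeval T (nodal s id) (∑ l ∈ s, nodalWeight s id l • E l) = x := by
  have hterm : ∀ l ∈ s, aeval T (nodal s id) (nodalWeight s id l • E l) =
      aeval T (Lagrange.basis s id l) x := by
    intro l hl
    rw [basis_eq_prod_sub_inv_mul_nodal_div hl, ← nodal_erase_eq_nodal_div hl,
      nodal_eq_mul_nodal_erase hl, map_smul, mul_comm, map_mul, map_mul, Module.End.mul_apply,
      Module.End.mul_apply, id, hE l hl, aeval_C, Module.algebraMap_end_apply]
  rw [map_sum, Finset.sum_congr rfl hterm, ← LinearMap.sum_apply, ← map_sum,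
    sum_basis Function.injective_id.injOn hs, map_one, Module.End.one_apply]

theorem exists_mem_aeval_apply_eq [IsAlgClosed K] (T : Module.End K M) (P : Submodule K M)
    {F : K[X]} (hF : F.Separable) (hdeg : F.natDegree ≠ 0) {x : M}
    (hE : ∀ l, F.IsRoot l → ∃ e ∈ P, aeval T (X - C l) e = x) :
    ∃ v ∈ P, aeval T F v = x := by
  classical
  set s := F.roots.toFinset
  set c := F.leadingCoeff
  have hfac : F = C c * nodal s id := by
    rw [nodal, Finset.prod_eq_multiset_prod, Multiset.toFinset_val, (nodup_roots hF).dedup]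
    simpa using (C_leadingCoeff_mul_prod_multiset_X_sub_C IsAlgClosed.card_roots_eq_natDegree).symm
  have hs : s.Nonempty := by
    rw [Multiset.toFinset_nonempty, ← Multiset.card_pos, IsAlgClosed.card_roots_eq_natDegree]
    exact Nat.pos_of_ne_zero hdeg
  have hE' (l : K) : ∃ e : M, F.IsRoot l → e ∈ P ∧ aeval T (X - C l) e = x := by
    by_cases hl : F.IsRoot l
    · obtain ⟨e, he, hex⟩ := hE l hl
      exact ⟨e, fun _ => ⟨he, hex⟩⟩
    · exact ⟨0, fun h => absurd h hl⟩
  choose E hE_spec using hE'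
  have hroot (l) (hl : l ∈ s) : F.IsRoot l := (mem_roots hF.ne_zero).1 (Multiset.mem_toFinset.1 hl)
  -- partial fractions: `1 / F = c⁻¹ ∑ₗ nodalWeight s id l / (X - l)`
  refine ⟨c⁻¹ • ∑ l ∈ s, nodalWeight s id l • E l,
    P.smul_mem _ (P.sum_mem fun l hl => P.smul_mem _ (hE_spec l (hroot l hl)).1), ?_⟩
  rw [hfac, map_mul, Module.End.mul_apply, aeval_C, Module.algebraMap_end_apply, map_smul,
    Lagrange.aeval_nodal_sum_nodalWeight_smul T hs fun l hl => (hE_spec l (hroot l hl)).2,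
    smul_inv_smul₀ (leadingCoeff_ne_zero.2 hF.ne_zero)]

end Algebra

lemma Irreducible.separable_map_intCast {K : Type*} [Field K] [CharZero K] {f : ℤ[X]}
    (hf : Irreducible f) (hdeg : f.natDegree ≠ 0) : (f.map (Int.castRingHom K)).Separable := by
  have hℚ := (IsPrimitive.Int.irreducible_iff_irreducible_map_cast (hf.isPrimitive hdeg)).1 hf
  have hK := hℚ.separable.map (f := algebraMap ℚ K)
  rwa [Polynomial.map_map, RingHom.ext_int ((algebraMap ℚ K).comp _) (Int.castRingHom K)] at hK

noncomputable section

def shift : Module.End ℂ (ℤ → ℂ) := LinearMap.funLeft ℂ ℂ (· + 1)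

lemma shift_pow_apply (k : ℕ) (v : ℤ → ℂ) (n : ℤ) : (shift ^ k) v n = v (n + k) := by
  induction k generalizing v n with
  | zero => simp
  | succ k ih =>
    rw [pow_succ, Module.End.mul_apply, ih, shift, LinearMap.funLeft_apply, Nat.cast_succ,
      add_assoc]

lemma aeval_shift_apply (p : ℂ[X]) (v : ℤ → ℂ) (n : ℤ) :
    aeval shift p v n = ∑ k ∈ Finset.range (p.natDegree + 1), p.coeff k * v (n + k) := by
  simp [aeval_eq_sum_range, shift_pow_apply]

lemma aeval_shift_X_sub_C (l : ℂ) (v : ℤ → ℂ) :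
    aeval shift (X - C l) v = fun n => v (n + 1) - l * v n := by
  ext n
  simp [shift, LinearMap.funLeft_apply, Module.algebraMap_end_apply]

def boundedSeq : Submodule ℂ (ℤ → ℂ) where
  carrier := {v | ∃ C, ∀ n, ‖v n‖ ≤ C}
  add_mem' := fun ⟨C₁, h₁⟩ ⟨C₂, h₂⟩ =>
    ⟨C₁ + C₂, fun n => (norm_add_le _ _).trans (add_le_add (h₁ n) (h₂ n))⟩
  zero_mem' := ⟨0, by simp⟩
  smul_mem' a _ := fun ⟨C, h⟩ =>
    ⟨‖a‖ * C, fun n => by simpa [norm_smul] using mul_le_mul_of_nonneg_left (h n) (norm_nonneg a)⟩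

def tendstoZero (L : Filter ℤ) : Submodule ℂ (ℤ → ℂ) where
  carrier := {v | Tendsto v L (𝓝 0)}
  add_mem' {u v} h₁ h₂ := by
    show Tendsto (fun n => u n + v n) L (𝓝 0)
    simpa using h₁.add h₂
  zero_mem' := tendsto_const_nhds
  smul_mem' a v h := by
    show Tendsto (fun n => a • v n) L (𝓝 0)
    simpa using h.const_smul a

def expDecay (d : ℕ → ℤ) : Submodule ℂ (ℤ → ℂ) where
  carrier := {v | ∃ C ≥ 0, ∃ θ ∈ Set.Ioo (0 : ℝ) 1, ∀ n, ‖v (d n)‖ ≤ C * θ ^ n}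
  add_mem' := by
    rintro u v ⟨C₁, hC₁, θ₁, hθ₁, h₁⟩ ⟨C₂, hC₂, θ₂, hθ₂, h₂⟩
    refine ⟨C₁ + C₂, by positivity, max θ₁ θ₂, ⟨lt_max_of_lt_left hθ₁.1, max_lt hθ₁.2 hθ₂.2⟩,
      fun n => (norm_add_le _ _).trans ?_⟩
    rw [add_mul]
    gcongr
    · exact (h₁ n).trans (by gcongr; exacts [hθ₁.1.le, le_max_left _ _])
    · exact (h₂ n).trans (by gcongr; exacts [hθ₂.1.le, le_max_right _ _])
  zero_mem' := ⟨0, le_rfl, 1 / 2, by norm_num, by simp⟩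
  smul_mem' a _ := fun ⟨C, hC, θ, hθ, h⟩ =>
    ⟨‖a‖ * C, by positivity, θ, hθ, fun n => by
      simpa [norm_smul, mul_assoc] using mul_le_mul_of_nonneg_left (h n) (norm_nonneg a)⟩

@[simp]
lemma mem_tendstoZero {L : Filter ℤ} {v : ℤ → ℂ} : v ∈ tendstoZero L ↔ Tendsto v L (𝓝 0) :=
  Iff.rfl

lemma boundedSeq_mem_invtSubmodule : boundedSeq ∈ shift.invtSubmodule :=
  fun _ ⟨C, h⟩ => ⟨C, fun n => h (n + 1)⟩

lemma tendstoZero_mem_invtSubmodule {L : Filter ℤ} (hL : Tendsto (· + 1) L L) :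
    tendstoZero L ∈ shift.invtSubmodule :=
  fun _ h => Tendsto.comp (f := (· + 1)) h hL

lemma eq_zpow_mul_of_forall_add_one_eq_mul {K : Type*} [DivisionRing K] {v : ℤ → K} {l : K}
    (hl : l ≠ 0) (h : ∀ n, v (n + 1) = l * v n) (n : ℤ) : v n = l ^ n * v 0 := by
  induction n using Int.induction_on with
  | zero => simp
  | succ k ih => rw [h, ih, ← mul_assoc, ← zpow_one_add₀ hl, add_comm]
  | pred k ih =>
    rw [← inv_mul_cancel_left₀ hl (v _), ← h, sub_add_cancel, ih, ← mul_assoc, ← zpow_neg_one,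
      ← zpow_add₀ hl, neg_add_eq_sub]

lemma eq_zero_of_forall_pow_mul_le {r a C : ℝ} (hr : 1 < r) (ha : 0 ≤ a)
    (h : ∀ n : ℕ, r ^ n * a ≤ C) : a = 0 := by
  refine ha.antisymm' (not_lt.1 fun ha => ?_)
  obtain ⟨n, hn⟩ :=
    ((tendsto_pow_atTop_atTop_of_one_lt hr).atTop_mul_const ha).eventually_gt_atTop C |>.exists
  exact (h n).not_gt hn

lemma eq_zero_of_forall_add_one_eq_mul {L : Filter ℤ} [L.NeBot] {v : ℤ → ℂ}
    (hv : v ∈ boundedSeq ⊓ tendstoZero L) {l : ℂ} (h : ∀ n, v (n + 1) = l * v n) : v = 0 := by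
  obtain ⟨⟨C, hC⟩, hlim⟩ := hv
  rcases eq_or_ne l 0 with rfl | hl
  · funext n
    simpa using h (n - 1)
  have hgeom (n : ℤ) : ‖v n‖ = ‖l‖ ^ n * ‖v 0‖ := by
    rw [eq_zpow_mul_of_forall_add_one_eq_mul hl h n, norm_mul, norm_zpow]
  suffices v 0 = 0 by
    funext n
    rw [eq_zpow_mul_of_forall_add_one_eq_mul hl h n, this, mul_zero, Pi.zero_apply]
  rw [← norm_eq_zero]
  rcases lt_trichotomy ‖l‖ 1 with hlt | heq | hgt
  · refine eq_zero_of_forall_pow_mul_le (C := C) (one_lt_inv₀ (norm_pos_iff.2 hl) |>.2 hlt)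
      (norm_nonneg _) fun n => ?_
    have := hC (-n)
    rwa [hgeom, zpow_neg, zpow_natCast, ← inv_pow] at this
  · have hconst : (fun n => ‖v n‖) = fun _ => ‖v 0‖ :=
      funext fun n => by rw [hgeom, heq, one_zpow, one_mul]
    have := hlim.norm
    rw [hconst, norm_zero] at this
    exact tendsto_nhds_unique tendsto_const_nhds this
  · refine eq_zero_of_forall_pow_mul_le (C := C) hgt (norm_nonneg _) fun n => ?_
    have := hC n
    rwa [hgeom, zpow_natCast] at this

lemma eq_zero_of_aeval_shift_eq_zero {L : Filter ℤ} [L.NeBot] (hL : Tendsto (· + 1) L L)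
    {F : ℂ[X]} (hF : F ≠ 0) {v : ℤ → ℂ} (hv : v ∈ boundedSeq ⊓ tendstoZero L)
    (h : aeval shift F v = 0) : v = 0 :=
  Module.End.eq_zero_of_aeval_apply_eq_zero
    (Module.End.invtSubmodule.inf_mem boundedSeq_mem_invtSubmodule
      (tendstoZero_mem_invtSubmodule hL))
    (fun l u hu hl => eq_zero_of_forall_add_one_eq_mul hu fun n => by
      simpa [aeval_shift_X_sub_C, sub_eq_zero, shift, LinearMap.funLeft_apply] using congrFun hl n)
    hF hv h


-- Natural exponents (with `0 ^ 0 = 1`) make `greenRight 0 = δ₁`, the solution of `σ̄ e = δ₀`.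
def greenRight (l : ℂ) : ℤ → ℂ := fun n => if 0 < n then l ^ (n - 1).toNat else 0

def greenLeft (l : ℂ) : ℤ → ℂ := fun n => if n ≤ 0 then -l⁻¹ ^ (1 - n).toNat else 0

lemma aeval_shift_greenRight (l : ℂ) :
    aeval shift (X - C l) (greenRight l) = fun n => (delta0 n : ℂ) := by
  rw [aeval_shift_X_sub_C]
  ext n
  simp only [greenRight, delta0]
  rcases lt_trichotomy n 0 with hn | rfl | hn
  · simp [hn.not_gt, hn.ne, show ¬ 0 < n + 1 by omega]
  · simp
  · obtain ⟨k, rfl⟩ : ∃ k : ℕ, n = k + 1 := ⟨(n - 1).toNat, by omega⟩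
    rw [if_pos (by omega), if_pos hn, if_neg hn.ne',
      show (k + 1 + 1 - 1 : ℤ).toNat = k + 1 by omega, show (k + 1 - 1 : ℤ).toNat = k by omega,
      pow_succ']
    simp

lemma aeval_shift_greenLeft {l : ℂ} (hl : l ≠ 0) :
    aeval shift (X - C l) (greenLeft l) = fun n => (delta0 n : ℂ) := by
  rw [aeval_shift_X_sub_C]
  ext n
  simp only [greenLeft, delta0]
  rcases lt_trichotomy n 0 with hn | rfl | hn
  · obtain ⟨k, rfl⟩ : ∃ k : ℕ, n = -k - 1 := ⟨(-n - 1).toNat, by omega⟩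
    rw [if_pos (by omega), if_pos hn.le, if_neg hn.ne,
      show (1 - (-k - 1 + 1) : ℤ).toNat = k + 1 by omega,
      show (1 - (-k - 1) : ℤ).toNat = k + 1 + 1 by omega, pow_succ' _ (k + 1), mul_neg,
      ← mul_assoc, mul_inv_cancel₀ hl]
    simp
  · simp [hl]
  · simp [hn.ne', show ¬ n ≤ 0 by omega, show ¬ n + 1 ≤ 0 by omega]

lemma greenRight_mem_boundedSeq {l : ℂ} (hl : ‖l‖ ≤ 1) : greenRight l ∈ boundedSeq :=
  ⟨1, fun n => by
    unfold greenRight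
    split_ifs
    · simpa using pow_le_one₀ (norm_nonneg l) hl
    · simp⟩

lemma greenLeft_mem_boundedSeq {l : ℂ} (hl : 1 ≤ ‖l‖) : greenLeft l ∈ boundedSeq :=
  ⟨1, fun n => by
    unfold greenLeft
    split_ifs
    · simpa using pow_le_one₀ (norm_nonneg l⁻¹) (by simpa using inv_le_one_of_one_le₀ hl)
    · simp⟩

lemma mem_expDecay_of_eq_zero {v : ℤ → ℂ} {d : ℕ → ℤ} (h : ∀ n, 0 < n → v (d n) = 0) :
    v ∈ expDecay d :=
  ⟨‖v (d 0)‖, norm_nonneg _, 1 / 2, by norm_num, fun n => by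
    rcases n.eq_zero_or_pos with rfl | hn
    · simp
    · simp [h n hn]⟩

lemma greenRight_mem_expDecay_natCast {l : ℂ} (hl : ‖l‖ < 1) :
    greenRight l ∈ expDecay Nat.cast := by
  set θ := (1 + ‖l‖) / 2 with hθ
  have hlθ : ‖l‖ ≤ θ := by linarith
  refine ⟨2, by norm_num, θ, ⟨by positivity, by linarith⟩, fun n => ?_⟩
  rcases n with _ | k
  · simp [greenRight]
  · have hk : (((k + 1 : ℕ) : ℤ) - 1).toNat = k := by omega
    rw [greenRight, if_pos (by omega), hk, norm_pow, pow_succ, ← mul_assoc]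
    calc ‖l‖ ^ k ≤ θ ^ k := pow_le_pow_left₀ (norm_nonneg l) hlθ k
      _ ≤ 2 * θ ^ k * θ := by
        nlinarith [mul_nonneg (pow_nonneg (hlθ.trans' (norm_nonneg l)) k)
          (show 0 ≤ 2 * θ - 1 by linarith [norm_nonneg l])]

lemma greenLeft_mem_expDecay_neg {l : ℂ} (hl : 1 < ‖l‖) :
    greenLeft l ∈ expDecay (fun n => -n) := by
  refine ⟨1, zero_le_one, ‖l‖⁻¹, ⟨by positivity, inv_lt_one_of_one_lt₀ hl⟩, fun n => ?_⟩
  dsimp only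
  rw [greenLeft, if_pos (by omega), show (1 - -(n : ℤ)).toNat = n + 1 by omega, norm_neg,
    norm_pow, norm_inv, one_mul]
  exact pow_le_pow_of_le_one (by positivity) (inv_le_one_of_one_le₀ hl.le) n.le_succ

lemma greenLeft_mem_expDecay_natCast (l : ℂ) : greenLeft l ∈ expDecay Nat.cast :=
  mem_expDecay_of_eq_zero fun n hn => by simp [greenLeft, hn.ne']

lemma greenRight_mem_expDecay_neg (l : ℂ) : greenRight l ∈ expDecay (fun n => -n) :=
  mem_expDecay_of_eq_zero fun n hn => by simp [greenRight]

end

theorem exists_mem_expDecay_natCast_aeval_shift_eq {F : ℂ[X]} (hF : F.Separable)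
    (hdeg : F.natDegree ≠ 0) :
    ∃ v ∈ boundedSeq ⊓ expDecay Nat.cast, aeval shift F v = fun n => (delta0 n : ℂ) := by
  refine exists_mem_aeval_apply_eq shift _ hF hdeg fun l _ => ?_
  by_cases hl : ‖l‖ < 1
  · exact ⟨greenRight l, ⟨greenRight_mem_boundedSeq hl.le, greenRight_mem_expDecay_natCast hl⟩,
      aeval_shift_greenRight l⟩
  · rw [not_lt] at hl
    exact ⟨greenLeft l, ⟨greenLeft_mem_boundedSeq hl, greenLeft_mem_expDecay_natCast l⟩,
      aeval_shift_greenLeft (norm_pos_iff.1 (zero_lt_one.trans_le hl))⟩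

theorem exists_mem_expDecay_neg_aeval_shift_eq {F : ℂ[X]} (hF : F.Separable)
    (hdeg : F.natDegree ≠ 0) :
    ∃ v ∈ boundedSeq ⊓ expDecay (fun n => -n), aeval shift F v = fun n => (delta0 n : ℂ) := by
  refine exists_mem_aeval_apply_eq shift _ hF hdeg fun l _ => ?_
  by_cases hl : ‖l‖ ≤ 1
  · exact ⟨greenRight l, ⟨greenRight_mem_boundedSeq hl, greenRight_mem_expDecay_neg l⟩,
      aeval_shift_greenRight l⟩
  · rw [not_le] at hl
    exact ⟨greenLeft l, ⟨greenLeft_mem_boundedSeq hl.le, greenLeft_mem_expDecay_neg hl⟩,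
      aeval_shift_greenLeft (norm_pos_iff.1 (zero_lt_one.trans hl))⟩

lemma tendsto_comp_of_mem_expDecay {d : ℕ → ℤ} {v : ℤ → ℂ} (hv : v ∈ expDecay d) :
    Tendsto (v ∘ d) atTop (𝓝 0) := by
  obtain ⟨C, -, θ, hθ, h⟩ := hv
  exact squeeze_zero_norm h <| by
    simpa using (tendsto_pow_atTop_nhds_zero_of_lt_one hθ.1.le hθ.2).const_mul C

lemma expDecay_natCast_le_tendstoZero : expDecay Nat.cast ≤ tendstoZero atTop := fun _ hv => by
  rw [← Nat.map_cast_int_atTop]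
  exact tendsto_map'_iff.2 (tendsto_comp_of_mem_expDecay hv)

lemma expDecay_neg_le_tendstoZero : expDecay (fun n => -n) ≤ tendstoZero atBot := fun v hv => by
  have h : Tendsto (fun n : ℤ => v (-n)) atTop (𝓝 0) := by
    rw [← Nat.map_cast_int_atTop]
    exact tendsto_map'_iff.2 (tendsto_comp_of_mem_expDecay hv)
  simpa [Function.comp_def] using h.comp tendsto_neg_atBot_atTop

lemma exists_exp_bound_of_mem_expDecay {d d' : ℕ → ℤ} {u v : ℤ → ℂ} (hu : u ∈ expDecay d)
    (hv : v ∈ expDecay d') :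
    ∃ C > (0 : ℝ), ∃ θ ∈ Set.Ioo (0 : ℝ) 1,
      ∀ n, ‖u (d n)‖ ≤ C * θ ^ n ∧ ‖v (d' n)‖ ≤ C * θ ^ n := by
  obtain ⟨C₁, hC₁, θ₁, hθ₁, h₁⟩ := hu
  obtain ⟨C₂, hC₂, θ₂, hθ₂, h₂⟩ := hv
  refine ⟨C₁ + C₂ + 1, by positivity, max θ₁ θ₂, ⟨lt_max_of_lt_left hθ₁.1, max_lt hθ₁.2 hθ₂.2⟩,
    fun n => ⟨(h₁ n).trans ?_, (h₂ n).trans ?_⟩⟩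
  · exact mul_le_mul (by linarith) (pow_le_pow_left₀ hθ₁.1.le (le_max_left _ _) n)
      (pow_nonneg hθ₁.1.le n) (by positivity)
  · exact mul_le_mul (by linarith) (pow_le_pow_left₀ hθ₂.1.le (le_max_right _ _) n)
      (pow_nonneg hθ₂.1.le n) (by positivity)

lemma fAct_sub (f : ℤ[X]) (w₁ w₂ : ℤ → ℝ) :
    fAct f (fun n => w₁ n - w₂ n) = fAct f w₁ - fAct f w₂ := by
  ext n
  simp [fAct, mul_sub]

lemma fAct_re (f : ℤ[X]) (v : ℤ → ℂ) :
    fAct f (fun n => (v n).re) = fun n => (aeval shift (f.map (Int.castRingHom ℂ)) v n).re := by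
  ext n
  simp [fAct, aeval_shift_apply, natDegree_map_eq_of_injective (Int.castRingHom ℂ).injective_int]

lemma ofReal_fAct (f : ℤ[X]) (w : ℤ → ℝ) :
    (fun n => (fAct f w n : ℂ)) = aeval shift (f.map (Int.castRingHom ℂ)) (fun n => (w n : ℂ)) := by
  ext n
  simp [fAct, aeval_shift_apply, natDegree_map_eq_of_injective (Int.castRingHom ℂ).injective_int]

def IsOneSidedHomoclinic (f : ℤ[X]) (L : Filter ℤ) (w : ℤ → ℝ) : Prop :=
  (∃ C, ∀ n, |w n| ≤ C) ∧ fAct f w = delta0 ∧ Tendsto w L (𝓝 0)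

lemma isOneSidedHomoclinic_re {f : ℤ[X]} {L : Filter ℤ} {v : ℤ → ℂ}
    (hv : v ∈ boundedSeq ⊓ tendstoZero L)
    (h : aeval shift (f.map (Int.castRingHom ℂ)) v = fun n => (delta0 n : ℂ)) :
    IsOneSidedHomoclinic f L fun n => (v n).re := by
  obtain ⟨⟨C, hC⟩, hlim⟩ := hv
  refine ⟨⟨C, fun n => (Complex.abs_re_le_norm _).trans (hC n)⟩, by simp [fAct_re, h], ?_⟩
  simpa [Function.comp_def] using (Complex.continuous_re.tendsto 0).comp hlim

lemma IsOneSidedHomoclinic.eq {f : ℤ[X]} {L : Filter ℤ} [L.NeBot] (hL : Tendsto (· + 1) L L)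
    (hf : f ≠ 0) {w₁ w₂ : ℤ → ℝ} (h₁ : IsOneSidedHomoclinic f L w₁)
    (h₂ : IsOneSidedHomoclinic f L w₂) : w₁ = w₂ := by
  obtain ⟨⟨C₁, hC₁⟩, hf₁, hlim₁⟩ := h₁
  obtain ⟨⟨C₂, hC₂⟩, hf₂, hlim₂⟩ := h₂
  have hmem : (fun n => ((w₁ n - w₂ n : ℝ) : ℂ)) ∈ boundedSeq ⊓ tendstoZero L := by
    refine ⟨⟨C₁ + C₂, fun n => ?_⟩, ?_⟩
    · rw [Complex.norm_real, Real.norm_eq_abs]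
      exact (abs_sub _ _).trans (add_le_add (hC₁ n) (hC₂ n))
    · have hlim := hlim₁.sub hlim₂
      rw [sub_zero] at hlim
      simpa [Function.comp_def] using (Complex.continuous_ofReal.tendsto 0).comp hlim
  have hker := eq_zero_of_aeval_shift_eq_zero hL
    ((Polynomial.map_ne_zero_iff (Int.castRingHom ℂ).injective_int).2 hf) hmem
    (by rw [← ofReal_fAct, fAct_sub, hf₁, hf₂, sub_self]; rfl)
  funext n
  simpa [sub_eq_zero] using congrFun hker n

theorem exists_unique_one_sided_homoclinic_general
    (f : Polynomial ℤ) (m : ℕ) (hm : 0 < m) (hdeg : f.natDegree = m)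
    (hirr : Irreducible f) :
    ∃ wp wm : ℤ → ℝ,
      ((∃ C : ℝ, ∀ n : ℤ, |wp n| ≤ C) ∧ fAct f wp = delta0 ∧ Tendsto wp atTop (𝓝 0)) ∧
      (∀ w : ℤ → ℝ, (∃ C : ℝ, ∀ n : ℤ, |w n| ≤ C) → fAct f w = delta0 →
        Tendsto w atTop (𝓝 0) → w = wp) ∧
      ((∃ C : ℝ, ∀ n : ℤ, |wm n| ≤ C) ∧ fAct f wm = delta0 ∧ Tendsto wm atBot (𝓝 0)) ∧
      (∀ w : ℤ → ℝ, (∃ C : ℝ, ∀ n : ℤ, |w n| ≤ C) → fAct f w = delta0 →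
        Tendsto w atBot (𝓝 0) → w = wm) ∧
      fAct f (fun n => wm n - wp n) = 0 ∧
      (∃ C > (0 : ℝ), ∃ θ ∈ Set.Ioo (0 : ℝ) 1, ∀ n : ℕ, 1 ≤ n →
        |wp (n : ℤ)| ≤ C * θ ^ n ∧ |wm (-(n : ℤ))| ≤ C * θ ^ n) := by
  have hsep := hirr.separable_map_intCast (K := ℂ) (by omega)
  have hdegℂ : (f.map (Int.castRingHom ℂ)).natDegree ≠ 0 := by
    rw [natDegree_map_eq_of_injective (Int.castRingHom ℂ).injective_int]
    omega
  obtain ⟨vp, ⟨hvp, hvp_exp⟩, hvp_sol⟩ := exists_mem_expDecay_natCast_aeval_shift_eq hsep hdegℂ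
  obtain ⟨vm, ⟨hvm, hvm_exp⟩, hvm_sol⟩ := exists_mem_expDecay_neg_aeval_shift_eq hsep hdegℂ
  have hplus : IsOneSidedHomoclinic f atTop fun n => (vp n).re :=
    isOneSidedHomoclinic_re ⟨hvp, expDecay_natCast_le_tendstoZero hvp_exp⟩ hvp_sol
  have hminus : IsOneSidedHomoclinic f atBot fun n => (vm n).re :=
    isOneSidedHomoclinic_re ⟨hvm, expDecay_neg_le_tendstoZero hvm_exp⟩ hvm_sol
  obtain ⟨C, hC, θ, hθ, hbound⟩ := exists_exp_bound_of_mem_expDecay hvp_exp hvm_exp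
  refine ⟨_, _, hplus, fun w h₁ h₂ h₃ => ?_, hminus, fun w h₁ h₂ h₃ => ?_, ?_, C, hC, θ, hθ,
    fun n _ => ⟨(Complex.abs_re_le_norm _).trans (hbound n).1,
      (Complex.abs_re_le_norm _).trans (hbound n).2⟩⟩
  · exact IsOneSidedHomoclinic.eq (tendsto_atTop_add_const_right _ 1 tendsto_id) hirr.ne_zero
      ⟨h₁, h₂, h₃⟩ hplus
  · exact IsOneSidedHomoclinic.eq (tendsto_atBot_add_const_right _ 1 tendsto_id) hirr.ne_zero
      ⟨h₁, h₂, h₃⟩ hminus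
  · rw [fAct_sub, hminus.2.1, hplus.2.1, sub_self]

/-- For an irreducible noncyclotomic `f`, there exist unique bounded sequences
`w^{Δ+}`, `w^{Δ−}` with `f(σ̄)w^{Δ±} = δ₀` and `w^{Δ+}ₙ → 0` as `n → +∞`,
`w^{Δ−}ₙ → 0` as `n → −∞`.  Moreover `w^{Δ−} − w^{Δ+} ∈ ker f(σ̄)`, and the decay is
exponential. -/
theorem exists_unique_one_sided_homoclinic
    (f : Polynomial ℤ) (m : ℕ) (hm : 0 < m) (hdeg : f.natDegree = m)
    (hlead : 0 < f.leadingCoeff) (hconst : f.coeff 0 ≠ 0) (hirr : Irreducible f)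
    (hnoncyc : ¬ ∃ z : ℂ, Polynomial.aeval z f = 0 ∧ ∃ n : ℕ, 0 < n ∧ z ^ n = 1) :
    ∃ wp wm : ℤ → ℝ,
      ((∃ C : ℝ, ∀ n : ℤ, |wp n| ≤ C) ∧ fAct f wp = delta0 ∧ Tendsto wp atTop (𝓝 0)) ∧
      (∀ w : ℤ → ℝ, (∃ C : ℝ, ∀ n : ℤ, |w n| ≤ C) → fAct f w = delta0 →
        Tendsto w atTop (𝓝 0) → w = wp) ∧
      ((∃ C : ℝ, ∀ n : ℤ, |wm n| ≤ C) ∧ fAct f wm = delta0 ∧ Tendsto wm atBot (𝓝 0)) ∧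
      (∀ w : ℤ → ℝ, (∃ C : ℝ, ∀ n : ℤ, |w n| ≤ C) → fAct f w = delta0 →
        Tendsto w atBot (𝓝 0) → w = wm) ∧
      fAct f (fun n => wm n - wp n) = 0 ∧
      (∃ C > (0 : ℝ), ∃ θ ∈ Set.Ioo (0 : ℝ) 1, ∀ n : ℕ, 1 ≤ n →
        |wp (n : ℤ)| ≤ C * θ ^ n ∧ |wm (-(n : ℤ))| ≤ C * θ ^ n) :=
  exists_unique_one_sided_homoclinic_general f m hm hdeg hirr
end

section
/- Let m ≥ 1 and let 𝕊^m = {γ ∈ ℂ^m : |γ_i| = 1 for i = 1,…,m}. Let G = ℂ^m ⋊ 𝕊^m be the semidirect product with group operation (z, γ)·(z', γ') = (z + M_γ z', γγ'), where M_γ z' = (γ₁ z'₁, …, γ_m z'_m) is coordinatewise multiplication. Then every compact subgroup K ⊆ G has the form K = {(M_γ t − t, γ) : γ ∈ Γ₀} for some compact subgroup Γ₀ ⊆ 𝕊^m and some t ∈ ℂ^m. -/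
open Filter Topology

/-!
Each coordinate projection `(z, γ) ↦ (zᵢ, γᵢ)` maps `K` onto a compact subgroup of the
one-dimensional group `ℂ ⋊ 𝕊¹`, so it suffices to treat `m = 1`. There, an element `(a, 1)`
generates the unbounded set `{(n a, 1)}`, hence `a = 0`: a compact subgroup meets the translations
trivially. Consequently `(a, α) ∈ K` is determined by `α`, and since `pq` and `qp` have the same
rotation part they coincide, which reads `a (β - 1) = b (α - 1)` for `(a, α), (b, β) ∈ K`.
Taking `t = b / (β - 1)` for any element with `β ≠ 1` gives `a = α t - t` throughout.
-/

section AffineGroup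

variable {𝕜 : Type*} [RCLike 𝕜] {S : Set (𝕜 × 𝕜)}
  (hone : ((0 : 𝕜), (1 : 𝕜)) ∈ S) (hmul : ∀ p ∈ S, ∀ q ∈ S, (p.1 + p.2 * q.1, p.2 * q.2) ∈ S)
include hone hmul

theorem natCast_mul_fst_mem_of_snd_eq_one {p : 𝕜 × 𝕜} (hp : p ∈ S) (h1 : p.2 = 1) (n : ℕ) :
    ((n : 𝕜) * p.1, (1 : 𝕜)) ∈ S := by
  induction n with
  | zero => simpa using hone
  | succ n ih =>
    convert hmul p hp _ ih using 1
    rw [h1]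
    ext <;> simp only [Nat.cast_succ, one_mul, mul_one]
    ring

theorem fst_eq_zero_of_snd_eq_one (hbdd : Bornology.IsBounded (Prod.fst '' S))
    {p : 𝕜 × 𝕜} (hp : p ∈ S) (h1 : p.2 = 1) : p.1 = 0 := by
  obtain ⟨C, hC⟩ := hbdd.exists_norm_le
  have hmultiple (n : ℕ) : (n : ℝ) * ‖p.1‖ ≤ C := by
    simpa [norm_mul] using
      hC _ ⟨_, natCast_mul_fst_mem_of_snd_eq_one hone hmul hp h1 n, rfl⟩
  by_contra hne
  have hpos : 0 < ‖p.1‖ := norm_pos_iff.mpr hne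
  obtain ⟨n, hn⟩ := exists_nat_gt (C / ‖p.1‖)
  rw [div_lt_iff₀ hpos] at hn
  linarith [hmultiple n]

variable (hne : ∀ p ∈ S, p.2 ≠ 0) (hinv : ∀ p ∈ S, (-(p.2⁻¹ * p.1), p.2⁻¹) ∈ S)
  (hbdd : Bornology.IsBounded (Prod.fst '' S))
include hne hinv hbdd

theorem fst_eq_of_snd_eq {p q : 𝕜 × 𝕜} (hp : p ∈ S) (hq : q ∈ S) (h : p.2 = q.2) :
    p.1 = q.1 := by
  have hquot := fst_eq_zero_of_snd_eq_one hone hmul hbdd (hmul _ (hinv p hp) q hq)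
    (by simp [← h, hne p hp])
  have hp2 := hne p hp
  simp only at hquot
  field_simp at hquot
  linear_combination -hquot

theorem fst_mul_snd_sub_one_comm {p q : 𝕜 × 𝕜} (hp : p ∈ S) (hq : q ∈ S) :
    p.1 * (q.2 - 1) = q.1 * (p.2 - 1) := by
  have hcomm := fst_eq_of_snd_eq hone hmul hne hinv hbdd (hmul p hp q hq) (hmul q hq p hp)
    (mul_comm _ _)
  linear_combination -hcomm

theorem exists_fst_eq_snd_mul_sub : ∃ t : 𝕜, ∀ p ∈ S, p.1 = p.2 * t - t := by
  by_cases hrot : ∃ q ∈ S, q.2 ≠ 1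
  · obtain ⟨q, hq, hq1⟩ := hrot
    refine ⟨q.1 / (q.2 - 1), fun p hp => ?_⟩
    have := fst_mul_snd_sub_one_comm hone hmul hne hinv hbdd hp hq
    have hq1' : q.2 - 1 ≠ 0 := sub_ne_zero.mpr hq1
    field_simp
    linear_combination this
  · push Not at hrot
    exact ⟨0, fun p hp => by simpa using fst_eq_zero_of_snd_eq_one hone hmul hbdd hp (hrot p hp)⟩

end AffineGroup

theorem compact_subgroup_of_semidirect_product_general
    (m : ℕ)
    (K : Set ((Fin m → ℂ) × (Fin m → ℂ)))
    (hsphere : ∀ p ∈ K, ∀ i : Fin m, ‖p.2 i‖ = 1)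
    (hone : ((0 : Fin m → ℂ), (1 : Fin m → ℂ)) ∈ K)
    (hmul : ∀ p ∈ K, ∀ q ∈ K, (p.1 + p.2 * q.1, p.2 * q.2) ∈ K)
    (hinv : ∀ p ∈ K, (-(p.2⁻¹ * p.1), p.2⁻¹) ∈ K)
    (hcomp : IsCompact K) :
    ∃ (Γ₀ : Set (Fin m → ℂ)) (t : Fin m → ℂ),
      (∀ γ ∈ Γ₀, ∀ i : Fin m, ‖γ i‖ = 1) ∧
      (1 : Fin m → ℂ) ∈ Γ₀ ∧
      (∀ γ ∈ Γ₀, ∀ γ' ∈ Γ₀, γ * γ' ∈ Γ₀) ∧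
      (∀ γ ∈ Γ₀, γ⁻¹ ∈ Γ₀) ∧
      IsCompact Γ₀ ∧
      K = {p | ∃ γ ∈ Γ₀, p = (γ * t - t, γ)} := by
  have hcoord (i : Fin m) : ∃ t : ℂ, ∀ p ∈ (fun p => (p.1 i, p.2 i)) '' K, p.1 = p.2 * t - t :=
    exists_fst_eq_snd_mul_sub ⟨_, hone, rfl⟩
      (by rintro _ ⟨p, hp, rfl⟩ _ ⟨q, hq, rfl⟩; exact ⟨_, hmul p hp q hq, rfl⟩)
      (by rintro _ ⟨p, hp, rfl⟩; exact norm_ne_zero_iff.mp (by simp [hsphere p hp i]))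
      (by rintro _ ⟨p, hp, rfl⟩; exact ⟨_, hinv p hp, rfl⟩)
      (by rw [Set.image_image]; exact (hcomp.image (by fun_prop)).isBounded)
  choose t ht using hcoord
  have hK : ∀ p ∈ K, p.1 = p.2 * t - t := fun p hp => funext fun i => ht i _ ⟨p, hp, rfl⟩
  refine ⟨Prod.snd '' K, t, ?_, ⟨_, hone, rfl⟩, ?_, ?_, hcomp.image continuous_snd, ?_⟩
  · rintro _ ⟨p, hp, rfl⟩
    exact hsphere p hp
  · rintro _ ⟨p, hp, rfl⟩ _ ⟨q, hq, rfl⟩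
    exact ⟨_, hmul p hp q hq, rfl⟩
  · rintro _ ⟨p, hp, rfl⟩
    exact ⟨_, hinv p hp, rfl⟩
  · ext p
    constructor
    · exact fun hp => ⟨p.2, ⟨p, hp, rfl⟩, Prod.ext (hK p hp) rfl⟩
    · rintro ⟨_, ⟨q, hq, rfl⟩, rfl⟩
      rwa [← hK q hq]

/-- Every compact subgroup `K` of `G = ℂ^m ⋊ 𝕊^m` (with operation
`(z,γ)·(z',γ') = (z + γ·z', γγ')`, where `γ·z'` is coordinatewise multiplication) has the form
`K = {(γ·t − t, γ) : γ ∈ Γ₀}` for a compact subgroup `Γ₀ ⊆ 𝕊^m` and some `t ∈ ℂ^m`. -/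
theorem compact_subgroup_of_semidirect_product
    (m : ℕ) (hm : 1 ≤ m)
    (K : Set ((Fin m → ℂ) × (Fin m → ℂ)))
    (hsphere : ∀ p ∈ K, ∀ i : Fin m, ‖p.2 i‖ = 1)
    (hone : ((0 : Fin m → ℂ), (1 : Fin m → ℂ)) ∈ K)
    (hmul : ∀ p ∈ K, ∀ q ∈ K, (p.1 + p.2 * q.1, p.2 * q.2) ∈ K)
    (hinv : ∀ p ∈ K, (-(p.2⁻¹ * p.1), p.2⁻¹) ∈ K)
    (hcomp : IsCompact K) :
    ∃ (Γ₀ : Set (Fin m → ℂ)) (t : Fin m → ℂ),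
      (∀ γ ∈ Γ₀, ∀ i : Fin m, ‖γ i‖ = 1) ∧
      (1 : Fin m → ℂ) ∈ Γ₀ ∧
      (∀ γ ∈ Γ₀, ∀ γ' ∈ Γ₀, γ * γ' ∈ Γ₀) ∧
      (∀ γ ∈ Γ₀, γ⁻¹ ∈ Γ₀) ∧
      IsCompact Γ₀ ∧
      K = {p | ∃ γ ∈ Γ₀, p = (γ * t - t, γ)} :=
  compact_subgroup_of_semidirect_product_general m K hsphere hone hmul hinv hcomp
end

section
/- Let β > 1 and let V_β ⊆ {0,…,⌈β−1⌉}^ℤ be the two-sided beta-shift space. If v, w ∈ V_β satisfy w⁺ ≺ v⁺ in the lexicographic order (where v⁺ = (v₁, v₂, …)), then the point v' defined by v'_n = v_n for n ≤ 0 and v'_n = w_n for n > 0 also lies in V_β. -/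
open Filter Topology

/-- The beta-transformation `T_β x = βx (mod 1)`. -/
noncomputable def Tbeta (β : ℝ) : ℝ → ℝ := fun x => Int.fract (β * x)

/-- The beta-expansion of `x ∈ [0,1)`: the digit of index `n+1` is
`e_β(x)_{n+1} = β T_β^n x − T_β^{n+1} x = ⌊β T_β^n x⌋`. -/
noncomputable def ebeta (β : ℝ) (x : ℝ) : ℕ → ℤ := fun n => ⌊β * (Tbeta β)^[n] x⌋

/-- The one-sided beta-shift space: the closure (in the product topology) of the set of
beta-expansions of points of `[0,1)`. -/
def VbetaPlus (β : ℝ) : Set (ℕ → ℤ) :=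
  closure {e | ∃ x : ℝ, 0 ≤ x ∧ x < 1 ∧ e = ebeta β x}

/-- For `v ∈ ℤ^ℤ`, the one-sided sequence `v⁺ = (v₁, v₂, …)`. -/
def plusPart (v : ℤ → ℤ) : ℕ → ℤ := fun n => v ((n : ℤ) + 1)

/-- The two-sided beta-shift space
`V_β = {v : (σ̄ⁿ v)⁺ ∈ V_β⁺ for every n ∈ ℤ}`. -/
def Vbeta (β : ℝ) : Set (ℤ → ℤ) :=
  {v | ∀ n : ℤ, (fun k : ℕ => v (n + (k : ℤ) + 1)) ∈ VbetaPlus β}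

/-- Strict lexicographic order on one-sided integer sequences. -/
def lexLt (w v : ℕ → ℤ) : Prop :=
  ∃ N : ℕ, (∀ k < N, w k = v k) ∧ w N < v N

/-!
Everything reduces to real points of `[0,1)` by approximating with finite prefixes. If the
expansion of `y` is lexicographically below that of `t` then `y < t`. If `y ≤ T_β^ℓ x`, pulling
`y` back `ℓ` times along the inverse branches `z ↦ (d + z)/β` of `T_β` selected by the digits `d`
of `x` stays below the corresponding orbit point of `x`, hence inside `[0,1)`, and yields a point
whose expansion is the first `ℓ` digits of `x` followed by the expansion of `y`. For a tail of the
spliced sequence starting before position `1`, take `x` approximating the matching tail of `v` and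
`y` approximating `w⁺`: the strict inequality `w⁺ ≺ v⁺` survives the approximation.
-/

open Set

section BetaTransformation

variable {β : ℝ}

lemma Tbeta_mem_Ico (β x : ℝ) : Tbeta β x ∈ Ico 0 1 :=
  ⟨Int.fract_nonneg _, Int.fract_lt_one _⟩

lemma mul_eq_ebeta_zero_add_Tbeta (β x : ℝ) : β * x = ebeta β x 0 + Tbeta β x :=
  (Int.floor_add_fract _).symm

lemma ebeta_succ (β x : ℝ) (j : ℕ) : ebeta β x (j + 1) = ebeta β (Tbeta β x) j := by
  simp only [ebeta, Function.iterate_succ_apply]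

lemma ebeta_iterate (β x : ℝ) (ℓ j : ℕ) :
    ebeta β ((Tbeta β)^[ℓ] x) j = ebeta β x (j + ℓ) := by
  simp only [ebeta, Function.iterate_add_apply]

lemma ebeta_zero_nonneg (hβ : 0 < β) {x : ℝ} (hx : 0 ≤ x) : 0 ≤ ebeta β x 0 :=
  Int.floor_nonneg.mpr (by simpa using mul_nonneg hβ.le hx)

lemma lt_of_lexLt_ebeta (hβ : 0 < β) {y t : ℝ} (h : lexLt (ebeta β y) (ebeta β t)) : y < t := by
  obtain ⟨N, hNe, hNlt⟩ := h
  induction N generalizing y t with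
  | zero =>
    have : β * y < β * t := Int.floor_mono.reflect_lt hNlt
    exact lt_of_mul_lt_mul_left this hβ.le
  | succ N ih =>
    have hT : Tbeta β y < Tbeta β t := by
      refine ih (fun k hk => ?_) ?_
      · simpa only [ebeta_succ] using hNe (k + 1) (by omega)
      · simpa only [ebeta_succ] using hNlt
    have : β * y < β * t := by
      rw [mul_eq_ebeta_zero_add_Tbeta, mul_eq_ebeta_zero_add_Tbeta β t, hNe 0 (by omega)]
      linarith
    exact lt_of_mul_lt_mul_left this hβ.le

lemma exists_le_and_ebeta_zero_eq_and_Tbeta_eq (hβ : 0 < β) {x z : ℝ} (hx : x ∈ Ico 0 1)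
    (hz : z ∈ Ico 0 1) (hzx : z ≤ Tbeta β x) :
    ∃ y ∈ Ico 0 1, y ≤ x ∧ ebeta β y 0 = ebeta β x 0 ∧ Tbeta β y = z := by
  set d := ebeta β x 0
  have hy : β * ((d + z) / β) = d + z := mul_div_cancel₀ _ hβ.ne'
  have hyx : (d + z) / β ≤ x := by
    rw [div_le_iff₀' hβ, mul_eq_ebeta_zero_add_Tbeta β x]
    linarith
  have hd : (0 : ℝ) ≤ d := by exact_mod_cast ebeta_zero_nonneg hβ hx.1
  refine ⟨(d + z) / β, ⟨by have := hz.1; positivity, hyx.trans_lt hx.2⟩, hyx, ?_, ?_⟩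
  · simp only [ebeta, Function.iterate_zero_apply, hy, Int.floor_intCast_add,
      Int.floor_eq_zero_iff.mpr hz, add_zero]
  · simp only [Tbeta, hy, Int.fract_intCast_add, Int.fract_eq_self.mpr hz]

lemma exists_le_and_ebeta_eq_and_iterate_Tbeta_eq (hβ : 0 < β) (ℓ : ℕ) :
    ∀ {x z : ℝ}, x ∈ Ico 0 1 → z ∈ Ico 0 1 → z ≤ (Tbeta β)^[ℓ] x →
      ∃ y ∈ Ico 0 1, y ≤ x ∧ (∀ j < ℓ, ebeta β y j = ebeta β x j) ∧ (Tbeta β)^[ℓ] y = z := by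
  induction ℓ with
  | zero => exact fun {x z} _ hz hzx => ⟨z, hz, hzx, fun j hj => (Nat.not_lt_zero j hj).elim, rfl⟩
  | succ ℓ ih =>
    intro x z hx hz hzx
    rw [Function.iterate_succ_apply] at hzx
    obtain ⟨y', hy', hy'x, hdig', hTy'⟩ := ih (Tbeta_mem_Ico β x) hz hzx
    obtain ⟨y, hy, hyx, hdig0, hTy⟩ :=
      exists_le_and_ebeta_zero_eq_and_Tbeta_eq hβ hx hy' hy'x
    refine ⟨y, hy, hyx, fun j hj => ?_, by rw [Function.iterate_succ_apply, hTy, hTy']⟩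
    cases j with
    | zero => exact hdig0
    | succ j => rw [ebeta_succ, ebeta_succ, hTy, hdig' j (by omega)]

end BetaTransformation

theorem PiNat.mem_closure_iff_forall_cylinder {E : ℕ → Type*} [∀ n, TopologicalSpace (E n)]
    [∀ n, DiscreteTopology (E n)] {s : Set (∀ n, E n)} {x : ∀ n, E n} :
    x ∈ closure s ↔ ∀ n, (PiNat.cylinder x n ∩ s).Nonempty := by
  rw [(PiNat.isTopologicalBasis_cylinders E).mem_closure_iff]
  refine ⟨fun h n => h _ ⟨x, n, rfl⟩ (PiNat.self_mem_cylinder x n), ?_⟩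
  rintro h _ ⟨y, n, rfl⟩ hx
  rw [← PiNat.mem_cylinder_iff_eq.mp hx]
  exact h n

lemma mem_VbetaPlus_iff {β : ℝ} {e : ℕ → ℤ} :
    e ∈ VbetaPlus β ↔ ∀ m : ℕ, ∃ x ∈ Ico (0 : ℝ) 1, ∀ j < m, ebeta β x j = e j := by
  simp only [VbetaPlus, PiNat.mem_closure_iff_forall_cylinder, Set.Nonempty, mem_inter_iff,
    PiNat.mem_cylinder_iff, mem_Ico]
  refine forall_congr' fun m => ⟨?_, ?_⟩
  · rintro ⟨_, hagree, x, hx0, hx1, rfl⟩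
    exact ⟨x, ⟨hx0, hx1⟩, hagree⟩
  · rintro ⟨x, ⟨hx0, hx1⟩, hagree⟩
    exact ⟨_, hagree, x, hx0, hx1, rfl⟩

theorem ite_mem_VbetaPlus_of_lexLt {β : ℝ} (hβ : 0 < β) {a b : ℕ → ℤ} (ha : a ∈ VbetaPlus β)
    (hb : b ∈ VbetaPlus β) (ℓ : ℕ) (hlt : lexLt b (fun k => a (ℓ + k))) :
    (fun k => if k < ℓ then a k else b (k - ℓ)) ∈ VbetaPlus β := by
  obtain ⟨N, hNe, hNlt⟩ := hlt
  rw [mem_VbetaPlus_iff]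
  intro m
  obtain ⟨x, hx, hxa⟩ := mem_VbetaPlus_iff.mp ha (ℓ + m + N + 1)
  obtain ⟨y, hy, hyb⟩ := mem_VbetaPlus_iff.mp hb (m + N + 1)
  have htail : ∀ j < m + N + 1, ebeta β ((Tbeta β)^[ℓ] x) j = a (ℓ + j) := fun j hj => by
    rw [ebeta_iterate, hxa _ (by omega), add_comm]
  have hyt : y < (Tbeta β)^[ℓ] x := by
    refine lt_of_lexLt_ebeta hβ ⟨N, fun k hk => ?_, ?_⟩
    · rw [hyb k (by omega), htail k (by omega), hNe k hk]
    · rw [hyb N (by omega), htail N (by omega)]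
      exact hNlt
  obtain ⟨z, hz, -, hzx, hTz⟩ :=
    exists_le_and_ebeta_eq_and_iterate_Tbeta_eq hβ ℓ hx hy hyt.le
  refine ⟨z, hz, fun j hj => ?_⟩
  split_ifs with hjℓ
  · rw [hzx j hjℓ, hxa j (by omega)]
  · rw [← hyb (j - ℓ) (by omega), ← hTz, ebeta_iterate, Nat.sub_add_cancel (not_lt.mp hjℓ)]

/-- if `v, w ∈ V_β` and `w⁺ ≺ v⁺` lexicographically, then the splicing
`v' = (..., v_{-1}, v₀, w₁, w₂, ...)` lies in `V_β`. -/
theorem beta_shift_splicing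
    (β : ℝ) (hβ : 1 < β) (v w : ℤ → ℤ)
    (hv : v ∈ Vbeta β) (hw : w ∈ Vbeta β)
    (hlt : lexLt (plusPart w) (plusPart v)) :
    (fun n : ℤ => if n ≤ 0 then v n else w n) ∈ Vbeta β := by
  intro n
  obtain hn | hn := le_or_gt 0 n
  · convert hw n using 2 with k
    exact if_neg (by omega)
  · obtain ⟨ℓ, rfl⟩ : ∃ ℓ : ℕ, n = -ℓ := ⟨(-n).toNat, by omega⟩
    have hlt' : lexLt (fun k : ℕ => w (0 + (k : ℤ) + 1))
        (fun k : ℕ => v (-ℓ + (ℓ + k : ℕ) + 1)) := by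
      convert hlt using 3 <;> simp [plusPart]
    convert ite_mem_VbetaPlus_of_lexLt (zero_lt_one.trans hβ) (hv (-ℓ)) (hw 0) ℓ hlt'
      using 2 with k
    dsimp only
    split_ifs <;> first | omega | (congr 1; omega)
end

section
/- Let β > 1 be an algebraic number with minimal polynomial f ∈ R₁, and let V_β be the two-sided beta-shift space. If v, w ∈ V_β satisfy v_n = w_n for every n < 0, v₀ > w₀, and w − v ∈ f(σ̄)(ℓ^∞(ℤ,ℤ)), then v₀ = w₀ + 1, v⁺ is the zero sequence, and w⁺ = e_β^*. Consequently, for every v ∈ V_β one has (v + f(σ̄)(ℓ¹(ℤ,ℤ))) ∩ V_β = {v}, where ℓ¹(ℤ,ℤ) denotes the group of finitely supported integer sequences. -/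
open Filter Topology

/-!
Write `betaVal β e = ∑ e_k β^{-(k+1)}`; sequences in `V_β^+` have values in `[0, 1]`, only `e_β^*`
has value `1`, and no finitely supported one does.

A bounded integer solution `y` of `f(σ̄) y = 0` on `n < 0` is periodic on `(-∞, deg f)`: there are
finitely many windows of length `deg f`, and a window determines the solution in both directions
because `f(0)` and the leading coefficient of `f` are nonzero. A periodic solution on `ℤ` vanishes, as `f` is coprime to every `X ^ p - 1`.
Hence `y = 0` below `deg f`, and since `f(β) = 0` the value of `w - v = f(σ̄) y` from index `0` on
vanishes: `v₀ - w₀ = betaVal β w⁺ - betaVal β v⁺ ∈ [-1, 1]`. With `v₀ > w₀` this forces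
`v₀ = w₀ + 1`, `betaVal β v⁺ = 0` and `betaVal β w⁺ = 1`.
-/

open Finset Polynomial

section Recurrence

variable {R : Type*}

/-- `polyShift f y` is `f(σ̄) y`, where `(σ̄ y) n = y (n + 1)`. -/
def polyShift [Semiring R] (f : R[X]) (y : ℤ → R) (n : ℤ) : R :=
  ∑ k ∈ range (f.natDegree + 1), f.coeff k * y (n + k)

lemma polyShift_comp_add_right [Semiring R] (f : R[X]) (y : ℤ → R) (t n : ℤ) :
    polyShift f (fun m => y (m + t)) n = polyShift f y (n + t) :=
  sum_congr rfl fun k _ => by rw [add_right_comm]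

lemma polyShift_sub [Ring R] (f : R[X]) (a b : ℤ → R) (n : ℤ) :
    polyShift f (a - b) n = polyShift f a n - polyShift f b n := by
  simp only [polyShift, Pi.sub_apply, mul_sub, sum_sub_distrib]

lemma polyShift_neg [Ring R] (f : R[X]) (y : ℤ → R) (n : ℤ) :
    polyShift f (-y) n = -polyShift f y n := by
  simp only [polyShift, Pi.neg_apply, mul_neg, sum_neg_distrib]

lemma polyShift_map {S : Type*} [Semiring R] [Semiring S] {φ : R →+* S}
    (hφ : Function.Injective φ) (f : R[X]) (y : ℤ → R) (n : ℤ) :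
    polyShift (f.map φ) (φ ∘ y) n = φ (polyShift f y n) := by
  simp only [polyShift, natDegree_map_eq_of_injective hφ, coeff_map, map_sum, map_mul,
    Function.comp_apply]

lemma polyShift_eq_leadingCoeff_mul [Semiring R] {f : R[X]} {e : ℤ → R} {n : ℤ}
    (h : ∀ k < f.natDegree, e (n + k) = 0) :
    polyShift f e n = f.leadingCoeff * e (n + f.natDegree) := by
  rw [polyShift, sum_range_succ, sum_eq_zero fun k hk => by rw [h k (mem_range.1 hk), mul_zero],
    zero_add, leadingCoeff]

lemma polyShift_eq_coeff_zero_mul [Semiring R] {f : R[X]} {e : ℤ → R} {n : ℤ}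
    (h : ∀ k, 0 < k → k ≤ f.natDegree → e (n + k) = 0) :
    polyShift f e n = f.coeff 0 * e n := by
  rw [polyShift, sum_range_succ', sum_eq_zero fun k hk => by
    rw [h (k + 1) k.succ_pos (mem_range.1 hk), mul_zero]]
  simp

lemma bdd_of_finite_support {y : ℤ → ℤ} (hy : {n | y n ≠ 0}.Finite) : ∃ C, ∀ n, |y n| ≤ C := by
  obtain ⟨C, hC⟩ := (hy.image fun n => |y n|).bddAbove
  refine ⟨max C 0, fun n => ?_⟩
  by_cases hn : y n = 0
  · simp [hn]
  · exact le_max_of_le_left (hC ⟨n, hn, rfl⟩)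

lemma finite_polyShift_ne_zero [Semiring R] (f : R[X]) {y : ℤ → R}
    (hy : {n | y n ≠ 0}.Finite) : {n | polyShift f y n ≠ 0}.Finite := by
  refine ((range (f.natDegree + 1)).finite_toSet.biUnion
    (t := fun k : ℕ => (fun n : ℤ => n - k) '' {n | y n ≠ 0}) fun k _ => hy.image _).subset
    fun n hn => ?_
  obtain ⟨k, hk, hyk⟩ := exists_ne_zero_of_sum_ne_zero hn
  exact Set.mem_biUnion hk ⟨n + k, right_ne_zero_of_mul hyk, add_sub_cancel_right _ _⟩

/-- The leading coefficient propagates zeros upwards, the constant coefficient downwards. -/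
lemma eq_zero_of_polyShift_eq_zero_of_window [Ring R] [NoZeroDivisors R] {f : R[X]}
    (hf : f ≠ 0) (hf₀ : f.coeff 0 ≠ 0) {e : ℤ → R} (he : ∀ n < 0, polyShift f e n = 0)
    {j : ℤ} (hj : j ≤ 0) (hwin : ∀ i, j ≤ i → i < j + f.natDegree → e i = 0) :
    ∀ n < (f.natDegree : ℤ), e n = 0 := by
  set d := f.natDegree
  suffices ∀ m : ℕ, ∀ n : ℤ, (n - j).natAbs = m → n < d → e n = 0 from
    fun n hn => this _ n rfl hn
  intro m
  induction m using Nat.strong_induction_on with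
  | _ m ih =>
  intro n hm hn
  rcases lt_or_ge n j with hnj | hjn
  · have hrec := he n (by omega)
    rw [polyShift_eq_coeff_zero_mul fun k hk hkd => ?_] at hrec
    · exact (mul_eq_zero.1 hrec).resolve_left hf₀
    rcases lt_or_ge (n + k) j with h | h
    · exact ih _ (by omega) _ rfl (by omega)
    · exact hwin _ h (by omega)
  rcases lt_or_ge n (j + d) with h | hnd
  · exact hwin n hjn h
  have hrec := he (n - d) (by omega)
  rw [polyShift_eq_leadingCoeff_mul fun k hk => ih _ (by omega) _ rfl (by omega),
    sub_add_cancel] at hrec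
  exact (mul_eq_zero.1 hrec).resolve_left (leadingCoeff_ne_zero.2 hf)

/-- Pigeonhole on the windows `(y (i - m))_{i < deg f}`, which range over a finite set. -/
lemma exists_periodic_of_polyShift_eq_zero {f : ℤ[X]} (hf : f ≠ 0) (hf₀ : f.coeff 0 ≠ 0)
    {y : ℤ → ℤ} (hy : ∃ C, ∀ n, |y n| ≤ C) (hrec : ∀ n < 0, polyShift f y n = 0) :
    ∃ p : ℕ, 0 < p ∧ ∀ n < (f.natDegree : ℤ), y (n - p) = y n := by
  obtain ⟨C, hC⟩ := hy
  obtain ⟨m₁, m₂, hm, hwin⟩ := Set.Finite.exists_lt_map_eq_of_forall_mem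
    (f := fun m : ℕ => fun i : Fin f.natDegree => y (i - m))
    (t := Set.univ.pi fun _ => Set.Icc (-C) C)
    (fun m i _ => abs_le.1 (hC _)) (Set.Finite.pi fun _ => Set.finite_Icc _ _)
  refine ⟨m₂ - m₁, by omega, fun n hn => sub_eq_zero.1 ?_⟩
  refine eq_zero_of_polyShift_eq_zero_of_window (e := (fun n => y (n + -(m₂ - m₁ : ℕ))) - y)
    hf hf₀ (fun n hn => ?_) (j := -m₁) (by omega) (fun i hi hi' => ?_) n hn
  · rw [polyShift_sub, polyShift_comp_add_right, hrec _ (by omega), hrec _ hn, sub_zero]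
  · have := congrFun hwin ⟨(i + m₁).toNat, by omega⟩
    simp only at this
    rw [Pi.sub_apply, sub_eq_zero]
    convert this.symm using 2 <;> omega

end Recurrence

section Periodic

variable {R : Type*}

variable (R) in
def shiftEnd [CommSemiring R] : Module.End R (ℤ → R) :=
  LinearMap.funLeft R R (· + 1)

lemma shiftEnd_pow_apply [CommSemiring R] (k : ℕ) (z : ℤ → R) (n : ℤ) :
    (shiftEnd R ^ k) z n = z (n + k) := by
  induction k generalizing z with
  | zero => simp
  | succ k ih =>
    rw [pow_succ, Module.End.mul_apply, ih]
    simp [shiftEnd, LinearMap.funLeft, add_assoc]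

lemma aeval_shiftEnd_apply [CommSemiring R] (f : R[X]) (z : ℤ → R) (n : ℤ) :
    aeval (shiftEnd R) f z n = polyShift f z n := by
  simp [aeval_eq_sum_range, polyShift, shiftEnd_pow_apply]

lemma eq_zero_of_polyShift_eq_zero_of_periodic {K : Type*} [Field K] {g : K[X]} {p : ℕ}
    (hcop : IsCoprime g (X ^ p - 1)) {z : ℤ → K} (hg : ∀ n, polyShift g z n = 0)
    (hper : ∀ n, z (n + p) = z n) : z = 0 := by
  refine Submodule.disjoint_def.1 (disjoint_ker_aeval_of_isCoprime (shiftEnd K) hcop) z ?_ ?_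
  · ext n
    simp [aeval_shiftEnd_apply, hg]
  · ext n
    simp [shiftEnd_pow_apply, hper]

lemma eq_of_modEq_of_periodic {y : ℤ → R} {p : ℕ} {N : ℤ} (hper : ∀ n < N, y (n - p) = y n)
    {a b : ℤ} (ha : a < N) (hb : b < N) (hab : a ≡ b [ZMOD p]) : y a = y b := by
  have hiter : ∀ t : ℕ, ∀ n < N, y (n - p * t) = y n := by
    intro t
    induction t with
    | zero => simp
    | succ t ih =>
      intro n hn
      rw [← ih n hn, ← hper (n - p * t) (by nlinarith)]
      congr 1
      push_cast
      ring
  wlog hle : a ≤ b generalizing a b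
  · exact (this hb ha hab.symm (by omega)).symm
  obtain ⟨t, ht⟩ := hab.dvd
  obtain rfl | hp := eq_or_ne p 0
  · rw [show b = a by simpa [sub_eq_zero] using ht]
  lift t to ℕ using by nlinarith [Nat.pos_of_ne_zero hp]
  rw [← hiter t b hb]
  congr 1
  omega

end Periodic

section MinimalPolynomial

variable {β : ℝ} {f : ℤ[X]}

lemma coeff_zero_ne_zero_of_irreducible (hirr : Irreducible f) (hroot : aeval β f = 0)
    (hβ : β ≠ 0) : f.coeff 0 ≠ 0 := by
  intro h
  simpa [hβ] using aeval_eq_zero_of_dvd_aeval_eq_zero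
    (irreducible_X.dvd_symm hirr (X_dvd_iff.2 h)) hroot

/-- `f` stays irreducible over `ℚ`, and cannot divide `X ^ p - 1` since `β ^ p ≠ 1`. -/
lemma isCoprime_map_X_pow_sub_one (hβ : 1 < β) (hirr : Irreducible f) (hroot : aeval β f = 0)
    {p : ℕ} (hp : p ≠ 0) : IsCoprime (f.map (Int.castRingHom ℚ)) (X ^ p - 1) := by
  have hdeg : f.natDegree ≠ 0 := (natDegree_pos_of_aeval_root hirr.ne_zero hroot
    fun x hx => by simpa using hx).ne'
  have hirrℚ := (IsPrimitive.Int.irreducible_iff_irreducible_map_cast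
    (hirr.isPrimitive hdeg)).1 hirr
  refine hirrℚ.coprime_iff_not_dvd.2 fun hdvd => (one_lt_pow₀ hβ hp).ne' ?_
  have := aeval_eq_zero_of_dvd_aeval_eq_zero hdvd
    (by rwa [show Int.castRingHom ℚ = algebraMap ℤ ℚ from rfl, aeval_map_algebraMap ℚ β f])
  simpa [sub_eq_zero] using this

/-- The periodic extension `n ↦ y (n % p - p)` is annihilated by both `f(σ̄)` and `σ̄ ^ p - 1`. -/
lemma eq_zero_of_polyShift_eq_zero_of_bounded (hβ : 1 < β) (hirr : Irreducible f)
    (hroot : aeval β f = 0) {y : ℤ → ℤ} (hy : ∃ C, ∀ n, |y n| ≤ C)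
    (hrec : ∀ n < 0, polyShift f y n = 0) : ∀ n < (f.natDegree : ℤ), y n = 0 := by
  have hf₀ := coeff_zero_ne_zero_of_irreducible hirr hroot (by positivity)
  obtain ⟨p, hp, hper⟩ := exists_periodic_of_polyShift_eq_zero hirr.ne_zero hf₀ hy hrec
  have hp' : (0 : ℤ) < p := by exact_mod_cast hp
  have hmod : ∀ n : ℤ, n % p - p ≡ n [ZMOD p] := fun n => by simp [Int.ModEq]
  have hlt : ∀ n : ℤ, n % p - p < 0 := fun n => by linarith [Int.emod_lt_of_pos n hp']
  have hextend : ∀ n < (f.natDegree : ℤ), y (n % p - p) = y n := fun n hn =>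
    eq_of_modEq_of_periodic hper (by linarith [hlt n]) hn (hmod n)
  have hz : (fun n => (y (n % p - p) : ℚ)) = 0 := by
    refine eq_zero_of_polyShift_eq_zero_of_periodic
      (isCoprime_map_X_pow_sub_one hβ hirr hroot hp.ne') (fun n => ?_) (fun n => by simp)
    have := polyShift_map (φ := Int.castRingHom ℚ) Int.cast_injective f
      (fun n => y (n % p - p)) n
    simp only [Function.comp_def, eq_intCast] at this
    rw [this, Int.cast_eq_zero, ← hrec (n % p - p) (hlt n)]
    refine sum_congr rfl fun k hk => congrArg _ ?_
    refine eq_of_modEq_of_periodic hper (by linarith [hlt (n + k)])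
      (by linarith [hlt n, mem_range.1 hk]) ?_
    exact (hmod _).trans ((hmod n).add_right k).symm
  intro n hn
  rw [← hextend n hn]
  simpa using congrFun hz n

end MinimalPolynomial

section BetaValue

variable {β : ℝ}

noncomputable def betaVal (β : ℝ) (e : ℕ → ℤ) : ℝ := ∑' k, (e k : ℝ) * β⁻¹ ^ (k + 1)

lemma summable_betaVal (hβ : 1 < β) {e : ℕ → ℤ} (he : ∃ B, ∀ k, |e k| ≤ B) :
    Summable fun k => (e k : ℝ) * β⁻¹ ^ (k + 1) := by
  obtain ⟨B, hB⟩ := he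
  have hr : 0 < β⁻¹ := by positivity
  refine Summable.of_norm_bounded
    ((summable_geometric_of_lt_one hr.le (inv_lt_one_of_one_lt₀ hβ)).mul_left (B * β⁻¹))
    fun k => ?_
  rw [norm_mul, norm_pow, Real.norm_of_nonneg hr.le, pow_succ, Real.norm_eq_abs]
  have : |(e k : ℝ)| ≤ B := by rw [← Int.cast_abs]; exact_mod_cast hB k
  calc |(e k : ℝ)| * (β⁻¹ ^ k * β⁻¹) ≤ B * (β⁻¹ ^ k * β⁻¹) := by gcongr
    _ = B * β⁻¹ * β⁻¹ ^ k := by ring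

lemma betaVal_eq_sum_add (hβ : 1 < β) {e : ℕ → ℤ} (he : ∃ B, ∀ k, |e k| ≤ B) (j : ℕ) :
    betaVal β e = ∑ k ∈ range j, (e k : ℝ) * β⁻¹ ^ (k + 1) +
      β⁻¹ ^ j * betaVal β fun k => e (k + j) := by
  rw [betaVal, ← (summable_betaVal hβ he).sum_add_tsum_nat_add j, betaVal, ← tsum_mul_left]
  congr 1
  exact tsum_congr fun k => by ring

lemma betaVal_sub (hβ : 1 < β) {e e' : ℕ → ℤ} (he : ∃ B, ∀ k, |e k| ≤ B)
    (he' : ∃ B, ∀ k, |e' k| ≤ B) : betaVal β (e - e') = betaVal β e - betaVal β e' := by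
  rw [betaVal, betaVal, betaVal, ← (summable_betaVal hβ he).tsum_sub (summable_betaVal hβ he')]
  exact tsum_congr fun k => by rw [Pi.sub_apply]; push_cast; ring

/-- Shifting `y` by `k ≤ deg f` multiplies its value by `β ^ k`, with no digit lost below index `0`
because `y` vanishes on `[0, deg f)`. -/
lemma betaVal_polyShift (hβ : 1 < β) {f : ℤ[X]} {y : ℤ → ℤ} (hy : ∃ C, ∀ n, |y n| ≤ C)
    (hy₀ : ∀ n : ℕ, n < f.natDegree → y n = 0) :
    betaVal β (fun n => polyShift f y n) = aeval β f * betaVal β (fun n => y n) := by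
  obtain ⟨C, hC⟩ := hy
  have hyb : ∃ B, ∀ k : ℕ, |y k| ≤ B := ⟨C, fun k => hC k⟩
  have hβ₀ : β ≠ 0 := by positivity
  have hshift : ∀ k ∈ range (f.natDegree + 1),
      ∑' n : ℕ, (y (n + k : ℕ) : ℝ) * β⁻¹ ^ (n + 1) = β ^ k * betaVal β fun n => y n := by
    intro k hk
    rw [betaVal_eq_sum_add hβ hyb k, sum_eq_zero fun i hi => by
      rw [hy₀ i (by linarith [mem_range.1 hi, mem_range.1 hk]), Int.cast_zero, zero_mul],
      zero_add, ← mul_assoc, ← mul_pow, mul_inv_cancel₀ hβ₀, one_pow, one_mul, betaVal]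
  have hsum : ∀ k ∈ range (f.natDegree + 1),
      Summable fun n : ℕ => (f.coeff k : ℝ) * (y (n + k : ℕ) : ℝ) * β⁻¹ ^ (n + 1) := by
    intro k _
    have hyk : ∃ B, ∀ n : ℕ, |y (n + k : ℕ)| ≤ B := ⟨C, fun n => hC _⟩
    simpa [mul_assoc] using (summable_betaVal hβ hyk).mul_left (f.coeff k : ℝ)
  calc betaVal β (fun n => polyShift f y n)
      = ∑' n : ℕ, ∑ k ∈ range (f.natDegree + 1),
          (f.coeff k : ℝ) * (y (n + k : ℕ) : ℝ) * β⁻¹ ^ (n + 1) := by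
        refine tsum_congr fun n => ?_
        simp [polyShift, sum_mul]
    _ = ∑ k ∈ range (f.natDegree + 1), (f.coeff k : ℝ) * β ^ k * betaVal β fun n => y n := by
        rw [Summable.tsum_finsetSum hsum]
        refine sum_congr rfl fun k hk => ?_
        simp only [mul_assoc, tsum_mul_left, hshift k hk]
    _ = aeval β f * betaVal β (fun n => y n) := by
        rw [← sum_mul, aeval_eq_sum_range]
        simp [zsmul_eq_mul]

end BetaValue

section BetaShift

variable {β : ℝ}

lemma Tbeta_iterate_mem_Ico {x : ℝ} (hx : x ∈ Set.Ico (0 : ℝ) 1) (k : ℕ) :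
    (Tbeta β)^[k] x ∈ Set.Ico (0 : ℝ) 1 := by
  cases k with
  | zero => exact hx
  | succ k =>
    rw [Function.iterate_succ_apply']
    exact ⟨Int.fract_nonneg _, Int.fract_lt_one _⟩

lemma ebeta_mem_Icc (hβ : 1 < β) {x : ℝ} (hx : x ∈ Set.Ico (0 : ℝ) 1) (k : ℕ) :
    ebeta β x k ∈ Set.Icc 0 ⌊β⌋ := by
  have h := Tbeta_iterate_mem_Ico (β := β) hx k
  exact ⟨Int.floor_nonneg.2 (by nlinarith [h.1]), Int.floor_le_floor (by nlinarith [h.1, h.2])⟩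

lemma sum_ebeta_mul_inv_pow (hβ : β ≠ 0) (x : ℝ) (K : ℕ) :
    ∑ k ∈ range K, (ebeta β x k : ℝ) * β⁻¹ ^ (k + 1) = x - β⁻¹ ^ K * (Tbeta β)^[K] x := by
  induction K with
  | zero => simp
  | succ K ih =>
    have hdigit : (ebeta β x K : ℝ) = β * (Tbeta β)^[K] x - (Tbeta β)^[K + 1] x := by
      rw [Function.iterate_succ_apply', Tbeta, Int.fract, ebeta]
      ring
    rw [sum_range_succ, ih, hdigit]
    linear_combination (β⁻¹ ^ K * (Tbeta β)^[K] x) * mul_inv_cancel₀ hβ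

lemma exists_ebeta_eqOn {e : ℕ → ℤ} (he : e ∈ VbetaPlus β) (N : ℕ) :
    ∃ x ∈ Set.Ico (0 : ℝ) 1, ∀ k ≤ N, e k = ebeta β x k := by
  have hopen : IsOpen {g : ℕ → ℤ | ∀ k ≤ N, g k = e k} := by
    have : {g : ℕ → ℤ | ∀ k ≤ N, g k = e k} = ⋂ k ∈ Set.Iic N, (fun g => g k) ⁻¹' {e k} := by
      ext; simp
    exact this ▸ (Set.finite_Iic N).isOpen_biInter
      fun k _ => (isOpen_discrete {e k}).preimage (continuous_apply k)
  obtain ⟨g, hg, x, hx₀, hx₁, rfl⟩ := mem_closure_iff.1 he _ hopen fun _ _ => rfl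
  exact ⟨x, ⟨hx₀, hx₁⟩, fun k hk => (hg k hk).symm⟩

namespace VbetaPlus

variable {e e' : ℕ → ℤ}

lemma digit_mem_Icc (hβ : 1 < β) (he : e ∈ VbetaPlus β) (k : ℕ) : e k ∈ Set.Icc 0 ⌊β⌋ := by
  obtain ⟨x, hx, hxe⟩ := exists_ebeta_eqOn he k
  exact hxe k le_rfl ▸ ebeta_mem_Icc hβ hx k

lemma abs_le (hβ : 1 < β) (he : e ∈ VbetaPlus β) (k : ℕ) : |e k| ≤ ⌊β⌋ :=
  _root_.abs_le.2 ⟨by linarith [(digit_mem_Icc hβ he k).1, (digit_mem_Icc hβ he k).2],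
    (digit_mem_Icc hβ he k).2⟩

lemma bdd (hβ : 1 < β) (he : e ∈ VbetaPlus β) : ∃ B, ∀ k, |e k| ≤ B :=
  ⟨⌊β⌋, abs_le hβ he⟩

lemma term_nonneg (hβ : 1 < β) (he : e ∈ VbetaPlus β) (k : ℕ) :
    0 ≤ (e k : ℝ) * β⁻¹ ^ (k + 1) := by
  have : (0 : ℝ) ≤ e k := by exact_mod_cast (digit_mem_Icc hβ he k).1
  positivity

lemma shift (he : e ∈ VbetaPlus β) (j : ℕ) : (fun k => e (k + j)) ∈ VbetaPlus β := by
  induction j with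
  | zero => simpa using he
  | succ j ih =>
    have hcomp : (fun k => e (k + (j + 1))) = (fun g k => g (k + 1)) fun k => e (k + j) :=
      funext fun k => congrArg e (by ring)
    rw [hcomp]
    refine map_mem_closure (continuous_pi fun k => continuous_apply _) ih ?_
    rintro _ ⟨x, hx₀, hx₁, rfl⟩
    refine ⟨Tbeta β x, Int.fract_nonneg _, Int.fract_lt_one _, funext fun k => ?_⟩
    simp only [ebeta, ← Function.iterate_succ_apply]

lemma sum_lt_one (hβ : 1 < β) (he : e ∈ VbetaPlus β) (K : ℕ) :
    ∑ k ∈ range K, (e k : ℝ) * β⁻¹ ^ (k + 1) < 1 := by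
  obtain ⟨x, hx, hxe⟩ := exists_ebeta_eqOn he K
  rw [sum_congr rfl fun k hk => by rw [hxe k (mem_range.1 hk).le], sum_ebeta_mul_inv_pow (by positivity)]
  have := (Tbeta_iterate_mem_Ico (β := β) hx K).1
  have : 0 ≤ β⁻¹ ^ K * (Tbeta β)^[K] x := by positivity
  linarith [hx.2]

lemma betaVal_nonneg (hβ : 1 < β) (he : e ∈ VbetaPlus β) : 0 ≤ betaVal β e :=
  tsum_nonneg (term_nonneg hβ he)

lemma betaVal_le_one (hβ : 1 < β) (he : e ∈ VbetaPlus β) : betaVal β e ≤ 1 :=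
  Real.tsum_le_of_sum_range_le (term_nonneg hβ he) fun K => (sum_lt_one hβ he K).le

lemma eq_zero_of_betaVal_eq_zero (hβ : 1 < β) (he : e ∈ VbetaPlus β) (h : betaVal β e = 0) :
    e = 0 := by
  have hsum := (summable_betaVal hβ (bdd hβ he)).hasSum
  rw [← betaVal, h, hasSum_zero_iff_of_nonneg (term_nonneg hβ he)] at hsum
  funext k
  have := congrFun hsum k
  simpa [show β ≠ 0 by positivity] using this

lemma betaVal_lt_one_of_tail_eq_zero (hβ : 1 < β) (he : e ∈ VbetaPlus β) {j : ℕ}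
    (htail : (fun k => e (k + j)) = 0) : betaVal β e < 1 := by
  rw [betaVal_eq_sum_add hβ (bdd hβ he) j, htail]
  simpa [betaVal] using sum_lt_one hβ he j

/-- Past the first index `N` where `e` and `e'` differ, the tail of `e` is worth at most one
unit of the digit `N`. -/
lemma betaVal_add_le_of_lexLt (hβ : 1 < β) (he : e ∈ VbetaPlus β) (he' : e' ∈ VbetaPlus β)
    (hlt : lexLt e e') : ∃ N : ℕ,
      betaVal β e + β⁻¹ ^ (N + 1) * betaVal β (fun k => e' (k + (N + 1))) ≤ betaVal β e' := by
  obtain ⟨N, hagree, hN⟩ := hlt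
  refine ⟨N, ?_⟩
  rw [betaVal_eq_sum_add hβ (bdd hβ he) (N + 1), betaVal_eq_sum_add hβ (bdd hβ he') (N + 1),
    sum_range_succ, sum_range_succ,
    sum_congr rfl fun k hk => by rw [hagree k (mem_range.1 hk)]]
  have hr : 0 < β⁻¹ ^ (N + 1) := by positivity
  have hdigit : (e N : ℝ) + 1 ≤ e' N := by exact_mod_cast hN
  have htail := betaVal_le_one hβ (shift he (N + 1))
  nlinarith

lemma eq_of_betaVal_eq_one (hβ : 1 < β) {estar : ℕ → ℤ}
    (hestar : estar ∈ VbetaPlus β ∧ ∀ e ∈ VbetaPlus β, e = estar ∨ lexLt e estar)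
    (he : e ∈ VbetaPlus β) (h : betaVal β e = 1) : e = estar := by
  refine (hestar.2 e he).resolve_right fun hlt => ?_
  obtain ⟨N, hN⟩ := betaVal_add_le_of_lexLt hβ he hestar.1 hlt
  have htail := shift hestar.1 (N + 1)
  have hr : 0 < β⁻¹ ^ (N + 1) := by positivity
  have hzero : betaVal β (fun k => estar (k + (N + 1))) = 0 := by
    nlinarith [betaVal_nonneg hβ htail, betaVal_le_one hβ hestar.1]
  have := betaVal_lt_one_of_tail_eq_zero hβ hestar.1 (eq_zero_of_betaVal_eq_zero hβ htail hzero)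
  nlinarith [betaVal_nonneg hβ htail]

end VbetaPlus

end BetaShift

section TwoSided

variable {β : ℝ} {f : ℤ[X]}

namespace Vbeta

variable {v : ℤ → ℤ}

lemma plusPart_mem (hv : v ∈ Vbeta β) : plusPart v ∈ VbetaPlus β := by
  convert hv 0 using 1
  funext k
  simp [plusPart]

lemma comp_add_right_mem (hv : v ∈ Vbeta β) (t : ℤ) : (fun n => v (n + t)) ∈ Vbeta β :=
  fun n => by convert hv (n + t) using 3; ring

lemma abs_le (hβ : 1 < β) (hv : v ∈ Vbeta β) (n : ℤ) : |v n| ≤ ⌊β⌋ := by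
  simpa using VbetaPlus.abs_le hβ (hv (n - 1)) 0

end Vbeta

/-- The value of `w - v = f(σ̄) y` from index `0` on is `f(β) = 0` times the value of `y`, since `y`
vanishes below `deg f`. -/
lemma head_sub_head_eq_betaVal_sub (hβ : 1 < β) (hirr : Irreducible f)
    (hroot : aeval β f = 0) {v w : ℤ → ℤ} (hv : v ∈ Vbeta β) (hw : w ∈ Vbeta β)
    (hagree : ∀ n < 0, v n = w n) {y : ℤ → ℤ} (hy : ∃ C, ∀ n, |y n| ≤ C)
    (hwv : ∀ n, w n - v n = polyShift f y n) :
    (v 0 - w 0 : ℝ) = betaVal β (plusPart w) - betaVal β (plusPart v) := by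
  have hy₀ := eq_zero_of_polyShift_eq_zero_of_bounded hβ hirr hroot hy
    fun n hn => by rw [← hwv, hagree n hn, sub_self]
  have h := betaVal_polyShift hβ hy fun n hn => hy₀ n (by exact_mod_cast hn)
  rw [hroot, zero_mul] at h
  simp_rw [← hwv] at h
  have hbdd : ∃ B, ∀ n : ℕ, |w n - v n| ≤ B := ⟨2 * ⌊β⌋, fun n => (abs_sub _ _).trans
    (by linarith [Vbeta.abs_le hβ hw n, Vbeta.abs_le hβ hv n])⟩
  have htail : (fun k : ℕ => w (k + 1 : ℕ) - v (k + 1 : ℕ)) = plusPart w - plusPart v :=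
    funext fun k => by simp [plusPart]
  rw [betaVal_eq_sum_add hβ hbdd 1, htail, betaVal_sub hβ
    (VbetaPlus.bdd hβ (Vbeta.plusPart_mem hw)) (VbetaPlus.bdd hβ (Vbeta.plusPart_mem hv))] at h
  simp only [range_one, sum_singleton, CharP.cast_eq_zero, zero_add, pow_one, Int.cast_sub] at h
  have := (mul_eq_zero.1 (by linear_combination h : β⁻¹ * ((w 0 - v 0 : ℝ) +
    (betaVal β (plusPart w) - betaVal β (plusPart v))) = 0)).resolve_left (by positivity)
  linarith

lemma rigidity_of_sub_eq_polyShift (hβ : 1 < β) (hirr : Irreducible f)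
    (hroot : aeval β f = 0) {v w : ℤ → ℤ} (hv : v ∈ Vbeta β) (hw : w ∈ Vbeta β)
    (hagree : ∀ n < 0, v n = w n) (hlt : w 0 < v 0) {y : ℤ → ℤ} (hy : ∃ C, ∀ n, |y n| ≤ C)
    (hwv : ∀ n, w n - v n = polyShift f y n) :
    v 0 = w 0 + 1 ∧ plusPart v = 0 ∧ betaVal β (plusPart w) = 1 := by
  have h := head_sub_head_eq_betaVal_sub hβ hirr hroot hv hw hagree hy hwv
  have hv₁ := VbetaPlus.betaVal_nonneg hβ (Vbeta.plusPart_mem hv)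
  have hw₁ := VbetaPlus.betaVal_le_one hβ (Vbeta.plusPart_mem hw)
  have hlt' : (w 0 : ℝ) + 1 ≤ v 0 := by exact_mod_cast hlt
  refine ⟨by exact_mod_cast (show (v 0 : ℝ) = w 0 + 1 by linarith),
    VbetaPlus.eq_zero_of_betaVal_eq_zero hβ (Vbeta.plusPart_mem hv) (by linarith), by linarith⟩

/-- Shifted to the first index where `u ≠ v`, rigidity gives the smaller sequence a tail of value
`1` and the other a zero tail; as `u` and `v` agree eventually, the first tail has finite support,
so its value is less than `1`. -/
lemma eq_of_sub_eq_polyShift_of_finite (hβ : 1 < β) (hirr : Irreducible f)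
    (hroot : aeval β f = 0) {u v : ℤ → ℤ} (hu : u ∈ Vbeta β) (hv : v ∈ Vbeta β)
    {y : ℤ → ℤ} (hy : ∃ C, ∀ n, |y n| ≤ C) (huv : ∀ n, u n - v n = polyShift f y n)
    (hfin : {n | u n ≠ v n}.Finite) : u = v := by
  by_contra hne
  obtain ⟨m, hm, hmin⟩ := hfin.exists_minimal (Function.ne_iff.1 hne)
  have hbelow : ∀ n < m, u n = v n := fun n hn => by_contra fun h => (hmin h hn.le).not_gt hn
  obtain ⟨M, hM⟩ := hfin.bddAbove
  have habove : ∀ n, M < n → u n = v n := fun n hn => by_contra fun h => (hM h).not_gt hn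
  clear hmin hM
  wlog hlt : u m < v m generalizing u v y
  · refine this hv hu (y := -y) ?_ (fun n => ?_) (by simpa only [ne_comm] using hfin)
      (Ne.symm hne) (Ne.symm hm) (fun n hn => (hbelow n hn).symm)
      (fun n hn => (habove n hn).symm) (lt_of_le_of_ne (not_lt.1 hlt) (Ne.symm hm))
    · obtain ⟨C, hC⟩ := hy
      exact ⟨C, fun n => by simpa using hC n⟩
    · rw [polyShift_neg, ← huv]
      ring
  obtain ⟨-, hv₀, hu₁⟩ := rigidity_of_sub_eq_polyShift hβ hirr hroot (v := fun n => v (n + m))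
    (w := fun n => u (n + m)) (Vbeta.comp_add_right_mem hv m) (Vbeta.comp_add_right_mem hu m)
    (fun n hn => (hbelow _ (by omega)).symm) (by simpa using hlt) (y := fun n => y (n + m))
    (let ⟨C, hC⟩ := hy; ⟨C, fun n => hC _⟩) (fun n => by rw [polyShift_comp_add_right, huv])
  refine (VbetaPlus.betaVal_lt_one_of_tail_eq_zero hβ
    (Vbeta.plusPart_mem (Vbeta.comp_add_right_mem hu m)) (j := (M - m).toNat) ?_).ne hu₁
  funext k
  have := congrFun hv₀ (k + (M - m).toNat)
  simp only [plusPart, Pi.zero_apply] at this ⊢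
  rw [← this]
  exact habove _ (by push_cast; omega)

end TwoSided

theorem beta_shift_rigidity_general
    (β : ℝ) (hβ : 1 < β)
    (f : Polynomial ℤ) (hirr : Irreducible f)
    (hroot : Polynomial.aeval β f = 0)
    (estar : ℕ → ℤ)
    (hestar : estar ∈ VbetaPlus β ∧ ∀ e ∈ VbetaPlus β, e = estar ∨ lexLt e estar) :
    (∀ v w : ℤ → ℤ, v ∈ Vbeta β → w ∈ Vbeta β →
      (∀ n : ℤ, n < 0 → v n = w n) → w 0 < v 0 →
      (∃ y : ℤ → ℤ, (∃ C : ℤ, ∀ n : ℤ, |y n| ≤ C) ∧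
        ∀ n : ℤ, w n - v n = ∑ k ∈ Finset.range (f.natDegree + 1),
          f.coeff k * y (n + (k : ℤ))) →
      (v 0 = w 0 + 1 ∧ plusPart v = 0 ∧ plusPart w = estar)) ∧
    (∀ v : ℤ → ℤ, v ∈ Vbeta β →
      {u : ℤ → ℤ | u ∈ Vbeta β ∧ ∃ y : ℤ → ℤ, {n : ℤ | y n ≠ 0}.Finite ∧
        ∀ n : ℤ, u n = v n + ∑ k ∈ Finset.range (f.natDegree + 1),
          f.coeff k * y (n + (k : ℤ))} = {v}) := by
  refine ⟨fun v w hv hw hagree hlt ⟨y, hy, hwv⟩ => ?_, fun v hv => ?_⟩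
  · obtain ⟨hhead, hv₀, hw₁⟩ :=
      rigidity_of_sub_eq_polyShift hβ hirr hroot hv hw hagree hlt hy hwv
    exact ⟨hhead, hv₀, VbetaPlus.eq_of_betaVal_eq_one hβ hestar (Vbeta.plusPart_mem hw) hw₁⟩
  ext u
  refine ⟨fun ⟨hu, y, hy, huv⟩ => ?_, ?_⟩
  · have huv' : ∀ n, u n - v n = polyShift f y n := fun n => by
      rw [huv, add_sub_cancel_left]
      rfl
    refine eq_of_sub_eq_polyShift_of_finite hβ hirr hroot hu hv (bdd_of_finite_support hy) huv'
      ((finite_polyShift_ne_zero f hy).subset fun n hn => ?_)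
    show polyShift f y n ≠ 0
    exact huv' n ▸ sub_ne_zero.2 hn
  · rintro rfl
    exact ⟨hv, 0, by simp, fun n => by simp⟩

/-- for an algebraic `β > 1` with minimal polynomial `f`: if `v, w ∈ V_β`,
`v_n = w_n` for `n < 0`, `v₀ > w₀` and `w − v ∈ f(σ̄)(ℓ^∞(ℤ,ℤ))`, then `v₀ = w₀ + 1`,
`v⁺ = 0` and `w⁺ = e_β^*`.  Consequently `(v + f(σ̄)(ℓ¹(ℤ,ℤ))) ∩ V_β = {v}` for every
`v ∈ V_β`. -/
theorem beta_shift_rigidity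
    (β : ℝ) (hβ : 1 < β)
    (f : Polynomial ℤ) (hirr : Irreducible f) (hlead : 0 < f.leadingCoeff)
    (hroot : Polynomial.aeval β f = 0)
    (estar : ℕ → ℤ)
    (hestar : estar ∈ VbetaPlus β ∧ ∀ e ∈ VbetaPlus β, e = estar ∨ lexLt e estar) :
    (∀ v w : ℤ → ℤ, v ∈ Vbeta β → w ∈ Vbeta β →
      (∀ n : ℤ, n < 0 → v n = w n) → w 0 < v 0 →
      (∃ y : ℤ → ℤ, (∃ C : ℤ, ∀ n : ℤ, |y n| ≤ C) ∧
        ∀ n : ℤ, w n - v n = ∑ k ∈ Finset.range (f.natDegree + 1),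
          f.coeff k * y (n + (k : ℤ))) →
      (v 0 = w 0 + 1 ∧ plusPart v = 0 ∧ plusPart w = estar)) ∧
    (∀ v : ℤ → ℤ, v ∈ Vbeta β →
      {u : ℤ → ℤ | u ∈ Vbeta β ∧ ∃ y : ℤ → ℤ, {n : ℤ | y n ≠ 0}.Finite ∧
        ∀ n : ℤ, u n = v n + ∑ k ∈ Finset.range (f.natDegree + 1),
          f.coeff k * y (n + (k : ℤ))} = {v}) :=
  beta_shift_rigidity_general β hβ f hirr hroot estar hestar
end
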